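/- arXiv:1911.08477 — 12 statements merged into one kernel-verified Lean document; each statement's English description precedes it below -/
import Mathlib

section
/- Let u, v, w be a basis of ℝ³, let γ ≠ 0 and set x = γ·u − v + γ·w (so that [u+w] = [v+x] is the intersection of the diagonals of the quadrilateral [u],[v],[w],[x]). Then for every nonzero λ ∈ ℝ there exists a symmetric bilinear form φ_λ on ℝ³, nonzero, such that φ_λ(u, u+λv) = φ_λ(v, u+λv) = φ_λ(v, λv+w) = φ_λ(w, λv+w) = φ_λ(w, w+λx) = φ_λ(x, w+λx) = φ_λ(x, λx+u) = φ_λ(u, λx+u) = 0. In other words, a quadrilateral admits a 1-parameter family of inscribed conics, parameterized by the tangency point [u+λv] on the edge-line through [u] and [v]. -/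
/-!
Normalize `φ(v, v) = 1` and work with the Gram matrix in the basis `u, v, w`. Tangency at
`[u + λv]` and at `[λv + w]` forces `φ(u, u) = φ(w, w) = λ²` and `φ(u, v) = φ(v, w) = -λ`;
tangency at `[w + λx]` then fixes the last entry `φ(u, w) = -2λ/γ - λ²`. Since `x` is
symmetric under `u ↔ w`, so is this Gram matrix, and the remaining tangency conditions
hold as well.
-/

open Module

section InscribedConic

variable {K V : Type*} [Field K] [AddCommGroup V] [Module K V]

def inscribedConicMatrix (γ l : K) : Matrix (Fin 3) (Fin 3) K :=
  !![l ^ 2, -l, -(2 * l) / γ - l ^ 2; -l, 1, -l; -(2 * l) / γ - l ^ 2, -l, l ^ 2]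

lemma inscribedConicMatrix_isSymm (γ l : K) : (inscribedConicMatrix γ l).IsSymm := by
  ext i j
  fin_cases i <;> fin_cases j <;> rfl

lemma Matrix.toBilin_apply_basis {ι : Type*} [Fintype ι] [DecidableEq ι] (b : Basis ι K V)
    (M : Matrix ι ι K) (i j : ι) : Matrix.toBilin b M (b i) (b j) = M i j := by
  rw [← LinearMap.BilinForm.toMatrix_apply b, LinearMap.BilinForm.toMatrix_toBilin]

theorem exists_inscribedConic (b : Basis (Fin 3) K V) {γ : K} (hγ : γ ≠ 0) (l : K) {x : V}
    (hx : x = γ • b 0 - b 1 + γ • b 2) :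
    ∃ φ : V →ₗ[K] V →ₗ[K] K, φ ≠ 0 ∧ (∀ y z, φ y z = φ z y) ∧
      φ (b 0) (b 0 + l • b 1) = 0 ∧ φ (b 1) (b 0 + l • b 1) = 0 ∧
      φ (b 1) (l • b 1 + b 2) = 0 ∧ φ (b 2) (l • b 1 + b 2) = 0 ∧
      φ (b 2) (b 2 + l • x) = 0 ∧ φ x (b 2 + l • x) = 0 ∧
      φ x (l • x + b 0) = 0 ∧ φ (b 0) (l • x + b 0) = 0 := by
  set φ := Matrix.toBilin b (inscribedConicMatrix γ l)
  have gram : ∀ i j, φ (b i) (b j) = inscribedConicMatrix γ l i j :=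
    Matrix.toBilin_apply_basis b _
  refine ⟨φ, fun h ↦ by simpa [h, inscribedConicMatrix] using gram 1 1,
    ((Matrix.isSymm_toBilin_iff_isSymm b).2 (inscribedConicMatrix_isSymm γ l)).eq, ?_⟩
  subst hx
  simp only [map_add, map_sub, map_smul, LinearMap.add_apply, LinearMap.sub_apply,
    LinearMap.smul_apply, smul_eq_mul, gram]
  have hf : γ * (-(2 * l) / γ - l ^ 2) = -(2 * l) - γ * l ^ 2 := by field_simp
  simp only [inscribedConicMatrix, Matrix.of_apply, Matrix.cons_val', Matrix.cons_val_zero,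
    Matrix.cons_val_one, Matrix.cons_val, Matrix.cons_val_fin_one, hf]
  refine ⟨?_, ?_, ?_, ?_, ?_, ?_, ?_, ?_⟩ <;> ring

end InscribedConic

theorem stmt1_general (u v w : Fin 3 → ℝ)
    (hb : LinearIndependent ℝ ![u, v, w])
    (γ : ℝ) (hγ : γ ≠ 0) (x : Fin 3 → ℝ) (hx : x = γ • u - v + γ • w)
    (l : ℝ) :
    ∃ φ : (Fin 3 → ℝ) →ₗ[ℝ] (Fin 3 → ℝ) →ₗ[ℝ] ℝ, φ ≠ 0 ∧ (∀ y z, φ y z = φ z y) ∧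
      φ u (u + l • v) = 0 ∧ φ v (u + l • v) = 0 ∧
      φ v (l • v + w) = 0 ∧ φ w (l • v + w) = 0 ∧
      φ w (w + l • x) = 0 ∧ φ x (w + l • x) = 0 ∧
      φ x (l • x + u) = 0 ∧ φ u (l • x + u) = 0 := by
  classical
  simpa using exists_inscribedConic (basisOfPiSpaceOfLinearIndependent hb) hγ l (x := x)
    (by simpa using hx)

/-- For every nonzero λ there is a nonzero symmetric bilinear form `φ_λ`
defining a conic inscribed in the quadrilateral `[u],[v],[w],[x]` with tangency points
`[u+λv], [λv+w], [w+λx], [λx+u]`: a 1-parameter family of inscribed conics. -/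
theorem stmt1 (u v w : Fin 3 → ℝ)
    (hb : LinearIndependent ℝ ![u, v, w])
    (hsp : Submodule.span ℝ ({u, v, w} : Set (Fin 3 → ℝ)) = ⊤)
    (γ : ℝ) (hγ : γ ≠ 0) (x : Fin 3 → ℝ) (hx : x = γ • u - v + γ • w)
    (l : ℝ) (hl : l ≠ 0) :
    ∃ φ : (Fin 3 → ℝ) →ₗ[ℝ] (Fin 3 → ℝ) →ₗ[ℝ] ℝ, φ ≠ 0 ∧ (∀ y z, φ y z = φ z y) ∧
      φ u (u + l • v) = 0 ∧ φ v (u + l • v) = 0 ∧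
      φ v (l • v + w) = 0 ∧ φ w (l • v + w) = 0 ∧
      φ w (w + l • x) = 0 ∧ φ x (w + l • x) = 0 ∧
      φ x (l • x + u) = 0 ∧ φ u (l • x + u) = 0 :=
  stmt1_general u v w hb γ hγ x hx l
end

section
/- Let u, v, w be a basis of ℝ³, γ ≠ 0, and x = γ·u − v + γ·w. If the quadrilateral with vertices [u],[v],[w],[x] has inscribed conic with tangency points [u+v], [v+w], [w+x], [x+u], then the four points [u−v], [v−w], [w−x], [x−u] are also the tangency points of an inscribed conic of the same quadrilateral: there exists a nonzero symmetric bilinear form ψ with ψ(u, u−v) = ψ(v, u−v) = ψ(v, v−w) = ψ(w, v−w) = ψ(w, w−x) = ψ(x, w−x) = ψ(x, x−u) = ψ(u, x−u) = 0. -/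
theorem exists_symm_bilin_apply_eq {K V ι : Type*} [Field K] [AddCommGroup V] [Module K V]
    [FiniteDimensional K V] [Fintype ι] [DecidableEq ι] {e : ι → V} (he : LinearIndependent K e)
    (hcard : Fintype.card ι = Module.finrank K V) {M : Matrix ι ι K} (hM : M.IsSymm) :
    ∃ ψ : V →ₗ[K] V →ₗ[K] K, (∀ y z, ψ y z = ψ z y) ∧ ∀ i j, ψ (e i) (e j) = M i j := by
  rw [← coe_basisOfLinearIndependentOfCardEqFinrank' e he hcard]
  set b := basisOfLinearIndependentOfCardEqFinrank' e he hcard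
  refine ⟨M.toBilin b, ((M.isSymm_toBilin_iff_isSymm b).2 hM).eq, fun i j => ?_⟩
  rw [← LinearMap.BilinForm.toMatrix_apply, ← LinearMap.BilinForm.toMatrix_symm,
    LinearEquiv.apply_symm_apply]

theorem stmt2_general (u v w : Fin 3 → ℝ)
    (hb : LinearIndependent ℝ ![u, v, w])
    (γ : ℝ) (hγ : γ ≠ 0) (x : Fin 3 → ℝ) (hx : x = γ • u - v + γ • w) :
    ∃ ψ : (Fin 3 → ℝ) →ₗ[ℝ] (Fin 3 → ℝ) →ₗ[ℝ] ℝ, ψ ≠ 0 ∧ (∀ y z, ψ y z = ψ z y) ∧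
      ψ u (u - v) = 0 ∧ ψ v (u - v) = 0 ∧
      ψ v (v - w) = 0 ∧ ψ w (v - w) = 0 ∧
      ψ w (w - x) = 0 ∧ ψ x (w - x) = 0 ∧
      ψ x (x - u) = 0 ∧ ψ u (x - u) = 0 := by
  /- In the basis `u, v, w` the first four conditions force the Gram matrix to have the shape
  below up to scale, `ψ w (w - x) = 0` fixes `k`, and the last three conditions then hold. -/
  set k := (2 - γ) / γ with hk
  obtain ⟨ψ, hsymm, hψ⟩ := exists_symm_bilin_apply_eq (M := !![1, 1, k; 1, 1, 1; k, 1, 1]) hb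
    (by simp) (by ext i j; fin_cases i <;> fin_cases j <;> rfl)
  simp only [Fin.forall_fin_succ, Matrix.of_apply, Matrix.cons_val', Matrix.cons_val_fin_one,
    Matrix.cons_val_zero, Matrix.cons_val_succ, forall_const] at hψ
  obtain ⟨⟨huu, huv, huw⟩, ⟨hvu, hvv, hvw⟩, ⟨hwu, hwv, hww⟩⟩ := hψ
  subst hx
  refine ⟨ψ, fun h => by simp [h] at huu, hsymm, ?_⟩
  simp only [map_add, map_sub, map_smul, LinearMap.add_apply, LinearMap.sub_apply,
    LinearMap.smul_apply, smul_eq_mul, huu, huv, huw, hvu, hvv, hvw, hwu, hwv, hww, hk]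
  refine ⟨by ring, by ring, by ring, by ring, ?_, ?_, ?_, ?_⟩ <;> field_simp <;> ring

/-- If the quadrilateral `[u],[v],[w],[x]` (with `x = γ•u - v + γ•w`) has an
inscribed conic with tangency points `[u+v], [v+w], [w+x], [x+u]`, then the points
`[u−v], [v−w], [w−x], [x−u]` are also the tangency points of an inscribed conic. -/
theorem stmt2 (u v w : Fin 3 → ℝ)
    (hb : LinearIndependent ℝ ![u, v, w])
    (hsp : Submodule.span ℝ ({u, v, w} : Set (Fin 3 → ℝ)) = ⊤)
    (γ : ℝ) (hγ : γ ≠ 0) (x : Fin 3 → ℝ) (hx : x = γ • u - v + γ • w)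
    (φ : (Fin 3 → ℝ) →ₗ[ℝ] (Fin 3 → ℝ) →ₗ[ℝ] ℝ) (hφ : φ ≠ 0)
    (hφsymm : ∀ y z, φ y z = φ z y)
    (h1 : φ u (u + v) = 0) (h2 : φ v (u + v) = 0)
    (h3 : φ v (v + w) = 0) (h4 : φ w (v + w) = 0)
    (h5 : φ w (w + x) = 0) (h6 : φ x (w + x) = 0)
    (h7 : φ x (x + u) = 0) (h8 : φ u (x + u) = 0) :
    ∃ ψ : (Fin 3 → ℝ) →ₗ[ℝ] (Fin 3 → ℝ) →ₗ[ℝ] ℝ, ψ ≠ 0 ∧ (∀ y z, ψ y z = ψ z y) ∧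
      ψ u (u - v) = 0 ∧ ψ v (u - v) = 0 ∧
      ψ v (v - w) = 0 ∧ ψ w (v - w) = 0 ∧
      ψ w (w - x) = 0 ∧ ψ x (w - x) = 0 ∧
      ψ x (x - u) = 0 ∧ ψ u (x - u) = 0 :=
  stmt2_general u v w hb γ hγ x hx
end

section
/- Let A₁, A₂, A₃ be three non-collinear points in the real affine plane, and let P₁₂, P₂₃, P₃₁ be points on the lines (A₁,A₂), (A₂,A₃), (A₃,A₁) respectively, each distinct from the vertices. Write each P as an affine combination: P₁₂ = (1−t₁)A₁ + t₁A₂, P₂₃ = (1−t₂)A₂ + t₂A₃, P₃₁ = (1−t₃)A₃ + t₃A₁ with tᵢ ∉ {0,1}. Then the three lines (A₁,P₂₃), (A₂,P₃₁), (A₃,P₁₂) are concurrent or all parallel if and only if (t₁/(1−t₁))·(t₂/(1−t₂))·(t₃/(1−t₃)) = 1. -/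
/-!
Take `A₁` as origin and `A₂ - A₁`, `A₃ - A₁` as axes. Non-collinearity says that the cross
product `D` of the axes is nonzero, and the cross product of two vectors is `D` times that of
their coordinate vectors, so incidences and parallelisms of the cevians are those of the cevians
of the standard triangle `(0,0), (1,0), (0,1)`. There the cevians through `(1,0)` and `(0,1)`
meet iff `Δ = 1 - t₁ + t₁ t₃ ≠ 0`, namely at `(t₁ t₃, (1 - t₁)(1 - t₃)) / Δ`, which lies on the
third cevian iff `t₁ t₂ t₃ = (1 - t₁)(1 - t₂)(1 - t₃)`; when `Δ = 0` the same identity is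
equivalent to the three cevians being parallel.
-/

open Affine

namespace Plane

def cross (u v : ℝ × ℝ) : ℝ := u.1 * v.2 - u.2 * v.1

lemma cross_smul_right (u v : ℝ × ℝ) (r : ℝ) : cross u (r • v) = r * cross u v := by
  simp only [cross, Prod.smul_fst, Prod.smul_snd, smul_eq_mul]; ring

lemma cross_swap (u v : ℝ × ℝ) : cross v u = -cross u v := by
  simp only [cross]; ring

lemma mem_span_singleton_iff_cross_eq_zero {w z : ℝ × ℝ} (hw : w ≠ 0) :
    z ∈ ℝ ∙ w ↔ cross w z = 0 := by
  rw [Submodule.mem_span_singleton]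
  constructor
  · rintro ⟨r, rfl⟩
    rw [cross_smul_right, cross, mul_comm w.1, sub_self, mul_zero]
  · intro h
    have hn : w.1 ^ 2 + w.2 ^ 2 ≠ 0 := by
      contrapose! hw
      ext <;> simp only [Prod.fst_zero, Prod.snd_zero] <;> nlinarith [sq_nonneg w.1, sq_nonneg w.2]
    -- the orthogonal projection of `z` onto `ℝ ∙ w`
    refine ⟨(w.1 * z.1 + w.2 * z.2) / (w.1 ^ 2 + w.2 ^ 2), ?_⟩
    simp only [cross] at h
    ext <;> simp only [Prod.smul_fst, Prod.smul_snd, smul_eq_mul] <;> field_simp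
    · linear_combination w.2 * h
    · linear_combination -w.1 * h

lemma span_singleton_eq_span_singleton_iff_cross_eq_zero {u v : ℝ × ℝ} (hu : u ≠ 0)
    (hv : v ≠ 0) : (ℝ ∙ u) = (ℝ ∙ v) ↔ cross u v = 0 := by
  constructor
  · intro h
    rw [← mem_span_singleton_iff_cross_eq_zero hu, h]
    exact Submodule.mem_span_singleton_self v
  · intro h
    apply le_antisymm <;> rw [Submodule.span_singleton_le_iff_mem]
    · rw [mem_span_singleton_iff_cross_eq_zero hv, cross_swap, h, neg_zero]
    · rwa [mem_span_singleton_iff_cross_eq_zero hu]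

lemma mem_affineSpan_pair_iff_cross_eq_zero {a b p : ℝ × ℝ} (hab : a ≠ b) :
    p ∈ line[ℝ, a, b] ↔ cross (b - a) (p - a) = 0 := by
  rw [← AffineSubspace.vsub_right_mem_direction_iff_mem (left_mem_affineSpan_pair ℝ a b),
    direction_affineSpan, vectorSpan_pair_rev, vsub_eq_sub, vsub_eq_sub,
    mem_span_singleton_iff_cross_eq_zero (sub_ne_zero.mpr hab.symm)]

lemma affineSpan_pair_parallel_iff_cross_eq_zero {a b c d : ℝ × ℝ} (hab : a ≠ b) (hcd : c ≠ d) :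
    line[ℝ, a, b] ∥ line[ℝ, c, d] ↔ cross (b - a) (d - c) = 0 := by
  rw [AffineSubspace.affineSpan_pair_parallel_iff_vectorSpan_eq, vectorSpan_pair_rev,
    vectorSpan_pair_rev, vsub_eq_sub, vsub_eq_sub,
    span_singleton_eq_span_singleton_iff_cross_eq_zero (sub_ne_zero.mpr hab.symm)
      (sub_ne_zero.mpr hcd.symm)]

lemma collinear_of_cross_eq_zero {a b c : ℝ × ℝ} (h : cross (b - a) (c - a) = 0) :
    Collinear ℝ ({a, b, c} : Set (ℝ × ℝ)) := by
  rcases eq_or_ne a b with rfl | hab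
  · simpa using collinear_pair ℝ a c
  · exact collinear_triple_of_mem_affineSpan_pair (left_mem_affineSpan_pair ℝ a b)
      (right_mem_affineSpan_pair ℝ a b) ((mem_affineSpan_pair_iff_cross_eq_zero hab).mpr h)

lemma ratio_product_eq_one_iff {t₁ t₂ t₃ : ℝ} (h₁ : t₁ ≠ 1) (h₂ : t₂ ≠ 1) (h₃ : t₃ ≠ 1) :
    t₁ / (1 - t₁) * (t₂ / (1 - t₂)) * (t₃ / (1 - t₃)) = 1 ↔
      t₁ * t₂ * t₃ = (1 - t₁) * (1 - t₂) * (1 - t₃) := by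
  rw [div_mul_div_comm, div_mul_div_comm, div_eq_one_iff_eq]
  exact mul_ne_zero (mul_ne_zero (sub_ne_zero.mpr h₁.symm) (sub_ne_zero.mpr h₂.symm))
    (sub_ne_zero.mpr h₃.symm)

theorem ceva_standard_triangle {t₁ t₂ t₃ : ℝ} (h₁ : t₁ ≠ 1) (h₂ : t₂ ≠ 1) (h₃ : t₃ ≠ 1) :
    ((∃ r : ℝ × ℝ, cross ((1 - t₂, t₂) - (0, 0)) (r - (0, 0)) = 0 ∧
        cross ((0, 1 - t₃) - (1, 0)) (r - (1, 0)) = 0 ∧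
        cross ((t₁, 0) - (0, 1)) (r - (0, 1)) = 0) ∨
      (cross ((1 - t₂, t₂) - (0, 0)) ((0, 1 - t₃) - (1, 0)) = 0 ∧
        cross ((0, 1 - t₃) - (1, 0)) ((t₁, 0) - (0, 1)) = 0 ∧
        cross ((1 - t₂, t₂) - (0, 0)) ((t₁, 0) - (0, 1)) = 0)) ↔
      t₁ / (1 - t₁) * (t₂ / (1 - t₂)) * (t₃ / (1 - t₃)) = 1 := by
  simp only [cross, Prod.fst_sub, Prod.snd_sub, sub_zero]
  rw [ratio_product_eq_one_iff h₁ h₂ h₃]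
  have h₁' := sub_ne_zero.mpr h₁.symm
  constructor
  · rintro (⟨⟨x, y⟩, c₁, c₂, c₃⟩ | ⟨q₁, q₂, -⟩)
    · linear_combination
        -(1 - t₁ + t₁ * t₃) * c₁ - t₂ * (c₃ + t₁ * c₂) + (1 - t₂) * (-c₂ - (1 - t₃) * c₃)
    · linear_combination -(1 - t₁) * q₁ + t₂ * q₂
  · intro hE
    by_cases hΔ : 1 - t₁ + t₁ * t₃ = 0
    · right
      have q₁ : (1 - t₂) * (1 - t₃) + t₂ = 0 :=
        mul_left_cancel₀ h₁' (by linear_combination t₂ * hΔ - hE)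
      refine ⟨?_, ?_, ?_⟩
      · linear_combination q₁
      · linear_combination hΔ
      · linear_combination -t₁ * q₁ - (1 - t₂) * hΔ
    · left
      refine ⟨(t₁ * t₃ / (1 - t₁ + t₁ * t₃), (1 - t₁) * (1 - t₃) / (1 - t₁ + t₁ * t₃)),
        ?_, ?_, ?_⟩ <;> field_simp
      · linear_combination -hE
      · ring
      · ring

def frame (O u v p : ℝ × ℝ) : ℝ × ℝ := O + p.1 • u + p.2 • v

section Frame

variable {O u v : ℝ × ℝ}

local notation "F" => frame O u v

lemma cross_frame_sub_frame (p q r s : ℝ × ℝ) :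
    cross (F q - F p) (F s - F r) = cross (q - p) (s - r) * cross u v := by
  simp only [frame, cross, Prod.fst_add, Prod.snd_add, Prod.fst_sub, Prod.snd_sub,
    Prod.smul_fst, Prod.smul_snd, smul_eq_mul]
  ring

lemma frame_injective (hD : cross u v ≠ 0) : Function.Injective F := by
  intro p q h
  simp only [frame, cross, Prod.ext_iff, Prod.fst_add, Prod.snd_add, Prod.smul_fst,
    Prod.smul_snd, smul_eq_mul] at h hD
  obtain ⟨h₁, h₂⟩ := h
  ext
  · exact mul_left_cancel₀ hD (by linear_combination v.2 * h₁ - v.1 * h₂)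
  · exact mul_left_cancel₀ hD (by linear_combination u.1 * h₂ - u.2 * h₁)

lemma frame_surjective (hD : cross u v ≠ 0) : Function.Surjective F := by
  intro P
  -- Cramer's rule
  refine ⟨(cross (P - O) v / cross u v, cross u (P - O) / cross u v), ?_⟩
  ext <;> simp only [frame, Prod.fst_add, Prod.snd_add, Prod.smul_fst, Prod.smul_snd,
    smul_eq_mul] <;>
    rw [div_mul_eq_mul_div, div_mul_eq_mul_div, add_assoc, ← add_div, add_div' _ _ _ hD,
      div_eq_iff hD] <;>
    simp only [cross, Prod.fst_sub, Prod.snd_sub] <;> ring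

lemma frame_mem_affineSpan_pair_iff (hD : cross u v ≠ 0) {p q : ℝ × ℝ} (hpq : p ≠ q)
    (r : ℝ × ℝ) :
    F r ∈ line[ℝ, F p, F q] ↔ cross (q - p) (r - p) = 0 := by
  rw [mem_affineSpan_pair_iff_cross_eq_zero ((frame_injective hD).ne hpq), cross_frame_sub_frame,
    mul_eq_zero, or_iff_left hD]

lemma affineSpan_frame_pair_parallel_iff (hD : cross u v ≠ 0) {p q r s : ℝ × ℝ} (hpq : p ≠ q)
    (hrs : r ≠ s) :
    line[ℝ, F p, F q] ∥ line[ℝ, F r, F s] ↔ cross (q - p) (s - r) = 0 := by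
  rw [affineSpan_pair_parallel_iff_cross_eq_zero ((frame_injective hD).ne hpq)
    ((frame_injective hD).ne hrs), cross_frame_sub_frame, mul_eq_zero, or_iff_left hD]

theorem ceva_frame (hD : cross u v ≠ 0) {t₁ t₂ t₃ : ℝ} (h₁ : t₁ ≠ 1) (h₂ : t₂ ≠ 1)
    (h₃ : t₃ ≠ 1) :
    ((∃ P, P ∈ line[ℝ, F (0, 0), F (1 - t₂, t₂)] ∧ P ∈ line[ℝ, F (1, 0), F (0, 1 - t₃)] ∧
        P ∈ line[ℝ, F (0, 1), F (t₁, 0)]) ∨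
      (line[ℝ, F (0, 0), F (1 - t₂, t₂)] ∥ line[ℝ, F (1, 0), F (0, 1 - t₃)] ∧
        line[ℝ, F (1, 0), F (0, 1 - t₃)] ∥ line[ℝ, F (0, 1), F (t₁, 0)] ∧
        line[ℝ, F (0, 0), F (1 - t₂, t₂)] ∥ line[ℝ, F (0, 1), F (t₁, 0)])) ↔
      t₁ / (1 - t₁) * (t₂ / (1 - t₂)) * (t₃ / (1 - t₃)) = 1 := by
  have n₁ : ((0, 0) : ℝ × ℝ) ≠ (1 - t₂, t₂) := by
    rw [Ne, Prod.mk.injEq]; rintro ⟨h, h'⟩; linarith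
  have n₂ : ((1, 0) : ℝ × ℝ) ≠ (0, 1 - t₃) := by simp
  have n₃ : ((0, 1) : ℝ × ℝ) ≠ (t₁, 0) := by simp
  rw [(frame_surjective (O := O) hD).exists]
  simp only [frame_mem_affineSpan_pair_iff hD n₁, frame_mem_affineSpan_pair_iff hD n₂,
    frame_mem_affineSpan_pair_iff hD n₃, affineSpan_frame_pair_parallel_iff hD n₁ n₂,
    affineSpan_frame_pair_parallel_iff hD n₂ n₃, affineSpan_frame_pair_parallel_iff hD n₁ n₃]
  exact ceva_standard_triangle h₁ h₂ h₃

end Frame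

end Plane

open Plane

theorem stmt3_general (A₁ A₂ A₃ : ℝ × ℝ)
    (hnc : ¬ Collinear ℝ ({A₁, A₂, A₃} : Set (ℝ × ℝ)))
    (t₁ t₂ t₃ : ℝ)
    (ht₁' : t₁ ≠ 1) (ht₂' : t₂ ≠ 1)
    (ht₃' : t₃ ≠ 1)
    (P₁₂ P₂₃ P₃₁ : ℝ × ℝ)
    (hP₁₂ : P₁₂ = (1 - t₁) • A₁ + t₁ • A₂)
    (hP₂₃ : P₂₃ = (1 - t₂) • A₂ + t₂ • A₃)
    (hP₃₁ : P₃₁ = (1 - t₃) • A₃ + t₃ • A₁) :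
    ((∃ P : ℝ × ℝ,
        P ∈ affineSpan ℝ ({A₁, P₂₃} : Set (ℝ × ℝ)) ∧
        P ∈ affineSpan ℝ ({A₂, P₃₁} : Set (ℝ × ℝ)) ∧
        P ∈ affineSpan ℝ ({A₃, P₁₂} : Set (ℝ × ℝ))) ∨
      (AffineSubspace.Parallel (affineSpan ℝ ({A₁, P₂₃} : Set (ℝ × ℝ)))
          (affineSpan ℝ ({A₂, P₃₁} : Set (ℝ × ℝ))) ∧
       AffineSubspace.Parallel (affineSpan ℝ ({A₂, P₃₁} : Set (ℝ × ℝ)))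
          (affineSpan ℝ ({A₃, P₁₂} : Set (ℝ × ℝ))) ∧
       AffineSubspace.Parallel (affineSpan ℝ ({A₁, P₂₃} : Set (ℝ × ℝ)))
          (affineSpan ℝ ({A₃, P₁₂} : Set (ℝ × ℝ))))) ↔
      (t₁ / (1 - t₁)) * (t₂ / (1 - t₂)) * (t₃ / (1 - t₃)) = 1 := by
  have hD : cross (A₂ - A₁) (A₃ - A₁) ≠ 0 := fun h ↦ hnc (collinear_of_cross_eq_zero h)
  have key := ceva_frame (O := A₁) hD ht₁' ht₂' ht₃'
  rwa [show frame A₁ (A₂ - A₁) (A₃ - A₁) (0, 0) = A₁ by simp [frame],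
    show frame A₁ (A₂ - A₁) (A₃ - A₁) (1, 0) = A₂ by simp [frame],
    show frame A₁ (A₂ - A₁) (A₃ - A₁) (0, 1) = A₃ by simp [frame],
    show frame A₁ (A₂ - A₁) (A₃ - A₁) (t₁, 0) = P₁₂ by simp only [frame, hP₁₂]; module,
    show frame A₁ (A₂ - A₁) (A₃ - A₁) (1 - t₂, t₂) = P₂₃ by simp only [frame, hP₂₃]; module,
    show frame A₁ (A₂ - A₁) (A₃ - A₁) (0, 1 - t₃) = P₃₁ by simp only [frame, hP₃₁]; module]
    at key

/-- Ceva's theorem: the cevians `(A₁,P₂₃)`, `(A₂,P₃₁)`, `(A₃,P₁₂)` are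
concurrent or all parallel iff the product of the signed edge ratios equals 1. -/
theorem stmt3 (A₁ A₂ A₃ : ℝ × ℝ)
    (hnc : ¬ Collinear ℝ ({A₁, A₂, A₃} : Set (ℝ × ℝ)))
    (t₁ t₂ t₃ : ℝ)
    (ht₁ : t₁ ≠ 0) (ht₁' : t₁ ≠ 1) (ht₂ : t₂ ≠ 0) (ht₂' : t₂ ≠ 1)
    (ht₃ : t₃ ≠ 0) (ht₃' : t₃ ≠ 1)
    (P₁₂ P₂₃ P₃₁ : ℝ × ℝ)
    (hP₁₂ : P₁₂ = (1 - t₁) • A₁ + t₁ • A₂)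
    (hP₂₃ : P₂₃ = (1 - t₂) • A₂ + t₂ • A₃)
    (hP₃₁ : P₃₁ = (1 - t₃) • A₃ + t₃ • A₁) :
    ((∃ P : ℝ × ℝ,
        P ∈ affineSpan ℝ ({A₁, P₂₃} : Set (ℝ × ℝ)) ∧
        P ∈ affineSpan ℝ ({A₂, P₃₁} : Set (ℝ × ℝ)) ∧
        P ∈ affineSpan ℝ ({A₃, P₁₂} : Set (ℝ × ℝ))) ∨
      (AffineSubspace.Parallel (affineSpan ℝ ({A₁, P₂₃} : Set (ℝ × ℝ)))
          (affineSpan ℝ ({A₂, P₃₁} : Set (ℝ × ℝ))) ∧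
       AffineSubspace.Parallel (affineSpan ℝ ({A₂, P₃₁} : Set (ℝ × ℝ)))
          (affineSpan ℝ ({A₃, P₁₂} : Set (ℝ × ℝ))) ∧
       AffineSubspace.Parallel (affineSpan ℝ ({A₁, P₂₃} : Set (ℝ × ℝ)))
          (affineSpan ℝ ({A₃, P₁₂} : Set (ℝ × ℝ))))) ↔
      (t₁ / (1 - t₁)) * (t₂ / (1 - t₂)) * (t₃ / (1 - t₃)) = 1 :=
  stmt3_general A₁ A₂ A₃ hnc t₁ t₂ t₃ ht₁' ht₂' ht₃' P₁₂ P₂₃ P₃₁ hP₁₂ hP₂₃ hP₃₁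
end

section
/- Let A₁, A₂, A₃ be three non-collinear points in the real affine plane, and let P₁₂ = (1−t₁)A₁ + t₁A₂, P₂₃ = (1−t₂)A₂ + t₂A₃, P₃₁ = (1−t₃)A₃ + t₃A₁ with tᵢ ∉ {0,1}. Then P₁₂, P₂₃, P₃₁ are collinear if and only if (t₁/(1−t₁))·(t₂/(1−t₂))·(t₃/(1−t₃)) = −1. -/
/-!
Three points `p q r` are collinear iff `cross (q - p) (r - p)`, twice the signed area of the
triangle `p q r`, vanishes. By multilinearity of the determinant, the signed area of
`P₁₂ P₂₃ P₃₁` is `(1 - t₁)(1 - t₂)(1 - t₃) + t₁ t₂ t₃` times that of `A₁ A₂ A₃`. The latter is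
nonzero, so the `Pᵢⱼ` are collinear exactly when this factor vanishes, which after dividing by
`(1 - t₁)(1 - t₂)(1 - t₃)` is the ratio condition.
-/

open AffineMap

def cross (u v : ℝ × ℝ) : ℝ := u.1 * v.2 - u.2 * v.1

theorem exists_smul_eq_of_cross_eq_zero {u v : ℝ × ℝ} (hu : u ≠ 0) (h : cross u v = 0) :
    ∃ a : ℝ, a • u = v := by
  have hnorm : u.1 ^ 2 + u.2 ^ 2 ≠ 0 := by
    contrapose! hu
    have h₁ := sq_nonneg u.1
    have h₂ := sq_nonneg u.2
    exact Prod.ext (pow_eq_zero_iff two_ne_zero |>.1 (by linarith))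
      (pow_eq_zero_iff two_ne_zero |>.1 (by linarith))
  unfold cross at h
  refine ⟨(u.1 * v.1 + u.2 * v.2) / (u.1 ^ 2 + u.2 ^ 2), Prod.ext ?_ ?_⟩ <;>
    simp only [Prod.smul_fst, Prod.smul_snd, smul_eq_mul] <;> field_simp
  · linear_combination u.2 * h
  · linear_combination (-u.1) * h

theorem collinear_iff_cross_sub_eq_zero (p q r : ℝ × ℝ) :
    Collinear ℝ ({p, q, r} : Set (ℝ × ℝ)) ↔ cross (q - p) (r - p) = 0 := by
  constructor
  · rw [collinear_iff_of_mem (Set.mem_insert p _)]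
    rintro ⟨v, hv⟩
    obtain ⟨a, rfl⟩ := hv q (by simp)
    obtain ⟨b, rfl⟩ := hv r (by simp)
    simp only [cross, vadd_eq_add, add_sub_cancel_right, Prod.smul_fst, Prod.smul_snd, smul_eq_mul]
    ring
  · intro h
    rcases eq_or_ne q p with rfl | hqp
    · simpa using collinear_pair ℝ q r
    obtain ⟨a, ha⟩ := exists_smul_eq_of_cross_eq_zero (sub_ne_zero.2 hqp) h
    have hr : r ∈ line[ℝ, p, q] := by
      rw [← sub_add_cancel r p, ← ha]
      exact lineMap_mem_affineSpan_pair a p q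
    rw [Set.pair_comm, Set.insert_comm]
    exact collinear_insert_of_mem_affineSpan_pair hr

theorem cross_lineMap_sub_lineMap (A₁ A₂ A₃ : ℝ × ℝ) (t₁ t₂ t₃ : ℝ) :
    cross (lineMap A₂ A₃ t₂ - lineMap A₁ A₂ t₁) (lineMap A₃ A₁ t₃ - lineMap A₁ A₂ t₁) =
      ((1 - t₁) * (1 - t₂) * (1 - t₃) + t₁ * t₂ * t₃) * cross (A₂ - A₁) (A₃ - A₁) := by
  simp only [cross, lineMap_apply_module, Prod.fst_sub, Prod.snd_sub, Prod.fst_add, Prod.snd_add,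
    Prod.smul_fst, Prod.smul_snd, smul_eq_mul]
  ring

theorem div_one_sub_mul_div_one_sub_mul_div_one_sub_eq_neg_one_iff {t₁ t₂ t₃ : ℝ}
    (h₁ : t₁ ≠ 1) (h₂ : t₂ ≠ 1) (h₃ : t₃ ≠ 1) :
    t₁ / (1 - t₁) * (t₂ / (1 - t₂)) * (t₃ / (1 - t₃)) = -1 ↔
      (1 - t₁) * (1 - t₂) * (1 - t₃) + t₁ * t₂ * t₃ = 0 := by
  have h : (1 - t₁) * (1 - t₂) * (1 - t₃) ≠ 0 := by
    simp only [ne_eq, mul_eq_zero, sub_eq_zero, not_or]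
    exact ⟨⟨h₁.symm, h₂.symm⟩, h₃.symm⟩
  rw [div_mul_div_comm, div_mul_div_comm, div_eq_iff h]
  constructor <;> intro h' <;> linarith

theorem stmt4_general (A₁ A₂ A₃ : ℝ × ℝ)
    (hnc : ¬ Collinear ℝ ({A₁, A₂, A₃} : Set (ℝ × ℝ)))
    (t₁ t₂ t₃ : ℝ)
    (ht₁' : t₁ ≠ 1) (ht₂' : t₂ ≠ 1)
    (ht₃' : t₃ ≠ 1)
    (P₁₂ P₂₃ P₃₁ : ℝ × ℝ)
    (hP₁₂ : P₁₂ = (1 - t₁) • A₁ + t₁ • A₂)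
    (hP₂₃ : P₂₃ = (1 - t₂) • A₂ + t₂ • A₃)
    (hP₃₁ : P₃₁ = (1 - t₃) • A₃ + t₃ • A₁) :
    Collinear ℝ ({P₁₂, P₂₃, P₃₁} : Set (ℝ × ℝ)) ↔
      (t₁ / (1 - t₁)) * (t₂ / (1 - t₂)) * (t₃ / (1 - t₃)) = -1 := by
  rw [collinear_iff_cross_sub_eq_zero] at hnc
  rw [div_one_sub_mul_div_one_sub_mul_div_one_sub_eq_neg_one_iff ht₁' ht₂' ht₃',
    collinear_iff_cross_sub_eq_zero, hP₁₂, hP₂₃, hP₃₁, ← lineMap_apply_module,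
    ← lineMap_apply_module, ← lineMap_apply_module, cross_lineMap_sub_lineMap, mul_eq_zero,
    or_iff_left hnc]

/-- Menelaus' theorem: `P₁₂, P₂₃, P₃₁` are collinear iff the product of the
signed edge ratios equals −1. -/
theorem stmt4 (A₁ A₂ A₃ : ℝ × ℝ)
    (hnc : ¬ Collinear ℝ ({A₁, A₂, A₃} : Set (ℝ × ℝ)))
    (t₁ t₂ t₃ : ℝ)
    (ht₁ : t₁ ≠ 0) (ht₁' : t₁ ≠ 1) (ht₂ : t₂ ≠ 0) (ht₂' : t₂ ≠ 1)
    (ht₃ : t₃ ≠ 0) (ht₃' : t₃ ≠ 1)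
    (P₁₂ P₂₃ P₃₁ : ℝ × ℝ)
    (hP₁₂ : P₁₂ = (1 - t₁) • A₁ + t₁ • A₂)
    (hP₂₃ : P₂₃ = (1 - t₂) • A₂ + t₂ • A₃)
    (hP₃₁ : P₃₁ = (1 - t₃) • A₃ + t₃ • A₁) :
    Collinear ℝ ({P₁₂, P₂₃, P₃₁} : Set (ℝ × ℝ)) ↔
      (t₁ / (1 - t₁)) * (t₂ / (1 - t₂)) * (t₃ / (1 - t₃)) = -1 :=
  stmt4_general A₁ A₂ A₃ hnc t₁ t₂ t₃ ht₁' ht₂' ht₃' P₁₂ P₂₃ P₃₁ hP₁₂ hP₂₃ hP₃₁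
end

section
/- Let u, v, w be a basis of ℝ³, γ ≠ 0, x = γ·u − v + γ·w, and λ ≠ 0. Define the symmetric bilinear form ψ on ℝ³ by ψ(u,u) = 1, ψ(v,v) = 1/λ², ψ(w,w) = 1, ψ(u,v) = −1/λ, ψ(v,w) = −(λ²+1)/(2λ²), ψ(u,w) = −(λ² + 2λ²γ + 2λ + 1)/(2λ²γ). Then ψ(u+λv, u) = ψ(u+λv, v) = ψ(w+λx, w) = ψ(w+λx, x) = 0 and ψ(u+λv, u+λv) = ψ(v+w, v+w) = ψ(w+λx, w+λx) = ψ(x+u, x+u) = 0. That is, the conic defined by ψ passes through the four points [u+λv], [v+w], [w+λx], [x+u] and is tangent to the lines ([u],[v]) and ([w],[x]) at [u+λv] and [w+λx] respectively. -/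
set_option maxHeartbeats 1000000 in
/-- The symmetric bilinear form `ψ` with the given values on the basis
`u, v, w` defines a conic through `[u+λv], [v+w], [w+λx], [x+u]` tangent to the lines
`([u],[v])` and `([w],[x])` at `[u+λv]` and `[w+λx]` respectively. -/
theorem stmt10 (u v w : Fin 3 → ℝ)
    (hb : LinearIndependent ℝ ![u, v, w])
    (hsp : Submodule.span ℝ ({u, v, w} : Set (Fin 3 → ℝ)) = ⊤)
    (γ : ℝ) (hγ : γ ≠ 0) (x : Fin 3 → ℝ) (hx : x = γ • u - v + γ • w)
    (l : ℝ) (hl : l ≠ 0)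
    (ψ : (Fin 3 → ℝ) →ₗ[ℝ] (Fin 3 → ℝ) →ₗ[ℝ] ℝ)
    (hsymm : ∀ y z, ψ y z = ψ z y)
    (huu : ψ u u = 1) (hvv : ψ v v = 1 / l ^ 2) (hww : ψ w w = 1)
    (huv : ψ u v = -1 / l)
    (hvw : ψ v w = -(l ^ 2 + 1) / (2 * l ^ 2))
    (huw : ψ u w = -(l ^ 2 + 2 * l ^ 2 * γ + 2 * l + 1) / (2 * l ^ 2 * γ)) :
    ψ (u + l • v) u = 0 ∧ ψ (u + l • v) v = 0 ∧
    ψ (w + l • x) w = 0 ∧ ψ (w + l • x) x = 0 ∧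
    ψ (u + l • v) (u + l • v) = 0 ∧ ψ (v + w) (v + w) = 0 ∧
    ψ (w + l • x) (w + l • x) = 0 ∧ ψ (x + u) (x + u) = 0 := by
  have hvu := hsymm v u
  have hwv := hsymm w v
  have hwu := hsymm w u
  have hux : ψ u x = γ * ψ u u - ψ u v + γ * ψ u w := by
    rw [hx]; simp
  have hvx : ψ v x = γ * ψ v u - ψ v v + γ * ψ v w := by
    rw [hx]; simp
  have hwx : ψ w x = γ * ψ w u - ψ w v + γ * ψ w w := by
    rw [hx]; simp
  have hxu := hsymm x u
  have hxv := hsymm x v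
  have hxw := hsymm x w
  have hxx : ψ x x = γ * ψ u x - ψ v x + γ * ψ w x := by
    conv_lhs => rw [hx]
    simp [hxu, hxv, hxw]
    rw [hux, hvx, hwx]
  have g1 : ψ (u + l • v) u = ψ u u + l * ψ v u := by simp
  have g2 : ψ (u + l • v) v = ψ u v + l * ψ v v := by simp
  have g3 : ψ (w + l • x) w = ψ w w + l * ψ x w := by simp
  have g4 : ψ (w + l • x) x = ψ w x + l * ψ x x := by simp
  have g5 : ψ (u + l • v) (u + l • v) = ψ u u + l * ψ u v + l * (ψ v u + l * ψ v v) := by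
    simp
  have g6 : ψ (v + w) (v + w) = ψ v v + ψ v w + (ψ w v + ψ w w) := by simp
  have g7 : ψ (w + l • x) (w + l • x) = ψ w w + l * ψ w x + l * (ψ x w + l * ψ x x) := by
    simp
  have g8 : ψ (x + u) (x + u) = ψ x x + ψ x u + (ψ u x + ψ u u) := by simp
  rw [g1, g2, g3, g4, g5, g6, g7, g8]
  simp only [hxx, hxu, hxv, hxw, hux, hvx, hwx, hvu, hwv, hwu,
    huu, hvv, hww, huv, hvw, huw]
  refine ⟨?_, ?_, ?_, ?_, ?_, ?_, ?_, ?_⟩ <;> field_simp <;> ring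
end

section
/- Let u, v, w be a basis of ℝ³, γ ≠ 0, and x = γ·u − v + γ·w (so [u+w] = [v+x]). Suppose the four points [u+v], [v+w], [w+x], [x+u] (which lie on the edge-lines of the quadrilateral [u],[v],[w],[x]) are collinear. Then [u+v] = [w+x] and [v+w] = [x+u] as points of the projective plane. -/
open Submodule Module

lemma key3 (u v w : Fin 3 → ℝ) (hb : LinearIndependent ℝ ![u, v, w])
    (a b c : ℝ) (h : a • u + b • v + c • w = 0) : a = 0 ∧ b = 0 ∧ c = 0 := by
  rw [Fintype.linearIndependent_iff] at hb
  have h2 := hb ![a, b, c] (by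
    simpa [Fin.sum_univ_three] using h)
  exact ⟨h2 0, h2 1, h2 2⟩


/-- If the four points `[u+v], [v+w], [w+x], [x+u]` (with
`x = γ•u − v + γ•w`) are collinear, then `[u+v] = [w+x]` and `[v+w] = [x+u]`. -/
theorem stmt11 (u v w : Fin 3 → ℝ)
    (hb : LinearIndependent ℝ ![u, v, w])
    (hsp : Submodule.span ℝ ({u, v, w} : Set (Fin 3 → ℝ)) = ⊤)
    (γ : ℝ) (hγ : γ ≠ 0) (x : Fin 3 → ℝ) (hx : x = γ • u - v + γ • w)
    (hcol : ∃ p q : Fin 3 → ℝ,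
        ({u + v, v + w, w + x, x + u} : Set (Fin 3 → ℝ)) ⊆
          (Submodule.span ℝ ({p, q} : Set (Fin 3 → ℝ)) : Set (Fin 3 → ℝ))) :
    Submodule.span ℝ ({u + v} : Set (Fin 3 → ℝ)) =
        Submodule.span ℝ ({w + x} : Set (Fin 3 → ℝ)) ∧
    Submodule.span ℝ ({v + w} : Set (Fin 3 → ℝ)) =
        Submodule.span ℝ ({x + u} : Set (Fin 3 → ℝ)) := by
  obtain ⟨p, q, hpq⟩ := hcol
  -- a = u+v, b = v+w are linearly independent
  have hab : LinearIndependent ℝ ![u + v, v + w] := by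
    rw [LinearIndependent.pair_iff]
    intro s t hst
    have h0 : s • u + (s + t) • v + t • w = 0 := by
      linear_combination (norm := module) hst
    obtain ⟨h1, h2, h3⟩ := key3 u v w hb _ _ _ h0
    exact ⟨h1, h3⟩
  have hrange : ({u + v, v + w} : Set (Fin 3 → ℝ)) = Set.range ![u + v, v + w] := by
    rw [Matrix.range_cons_cons_empty]
  have h2 : finrank ℝ (span ℝ ({u + v, v + w} : Set (Fin 3 → ℝ))) = 2 := by
    rw [hrange, finrank_span_eq_card hab]; simp
  have hle : span ℝ ({u + v, v + w} : Set (Fin 3 → ℝ)) ≤ span ℝ ({p, q} : Set (Fin 3 → ℝ)) := by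
    rw [span_le]
    rintro y (rfl | rfl)
    · exact hpq (by simp)
    · exact hpq (by simp)
  have hfr : finrank ℝ (span ℝ ({p, q} : Set (Fin 3 → ℝ))) ≤ 2 := by
    classical
    refine (finrank_span_le_card _).trans ?_
    have : ({p, q} : Set (Fin 3 → ℝ)).toFinset ⊆ {p, q} := by
      intro y hy; simpa using (by simpa using hy)
    calc ({p, q} : Set (Fin 3 → ℝ)).toFinset.card ≤ ({p, q} : Finset (Fin 3 → ℝ)).card :=
          Finset.card_le_card this
      _ ≤ 2 := Finset.card_insert_le _ _ |>.trans (by simp)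
  have heq : span ℝ ({u + v, v + w} : Set (Fin 3 → ℝ)) = span ℝ ({p, q} : Set (Fin 3 → ℝ)) :=
    Submodule.eq_of_le_of_finrank_le hle (by omega)
  have hc : w + x ∈ span ℝ ({u + v, v + w} : Set (Fin 3 → ℝ)) := by
    rw [heq]; exact hpq (by simp)
  rw [Submodule.mem_span_pair] at hc
  obtain ⟨α, β, hαβ⟩ := hc
  have h0 : (α - γ) • u + (α + β + 1) • v + (β - γ - 1) • w = 0 := by
    rw [hx] at hαβ
    linear_combination (norm := module) hαβ
  obtain ⟨e1, e2, e3⟩ := key3 u v w hb _ _ _ h0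
  have hγ1 : γ = -1 := by linarith
  subst hγ1
  have hwx : w + x = (-1 : ℝ) • (u + v) := by rw [hx]; module
  have hxu : x + u = (-1 : ℝ) • (v + w) := by rw [hx]; module
  constructor
  · rw [hwx]
    exact (Submodule.span_singleton_smul_eq (by norm_num : IsUnit (-1 : ℝ)) _).symm
  · rw [hxu]
    exact (Submodule.span_singleton_smul_eq (by norm_num : IsUnit (-1 : ℝ)) _).symm
end

section
/- Let φ be a nondegenerate symmetric bilinear form on ℝ³ defining a nondegenerate conic in the real projective plane, and let ℓ₁, ℓ₂ be two distinct tangent lines of the conic with tangency points [p₁], [p₂]. If ℓ₃, ℓ₄ are two further tangent lines of the conic such that ℓ₁, ℓ₃, ℓ₂, ℓ₄ (in this cyclic order) form a quadrilateral circumscribed about the conic, then the line joining [p₁] and [p₂] passes through the intersection point of the two diagonals of that quadrilateral. -/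
private lemma stmt13_span_top (u v w : Fin 3 → ℝ) (h : LinearIndependent ℝ ![u, v, w]) :
    Submodule.span ℝ ({u, v, w} : Set (Fin 3 → ℝ)) = ⊤ := by
  have hr : Set.range ![u, v, w] = ({u, v, w} : Set (Fin 3 → ℝ)) := by
    simp only [Matrix.range_cons, Matrix.range_empty, Set.union_empty, Set.union_singleton]
    ext t; simp; tauto
  have := h.span_eq_top_of_card_eq_finrank (by simp)
  rwa [hr] at this

private lemma stmt13_coords (u v w t : Fin 3 → ℝ) (h : LinearIndependent ℝ ![u, v, w]) :
    ∃ r s q : ℝ, t = r • u + s • v + q • w := by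
  have ht : t ∈ Submodule.span ℝ ({u, v, w} : Set (Fin 3 → ℝ)) := by
    rw [stmt13_span_top u v w h]; trivial
  rw [Submodule.mem_span_insert] at ht
  obtain ⟨r, zz, hz, hzz⟩ := ht
  rw [Submodule.mem_span_pair] at hz
  obtain ⟨s, q, rfl⟩ := hz
  exact ⟨r, s, q, by rw [hzz]; abel⟩

private lemma stmt13_killer (φ : (Fin 3 → ℝ) →ₗ[ℝ] (Fin 3 → ℝ) →ₗ[ℝ] ℝ)
    (hnd : ∀ y : Fin 3 → ℝ, (∀ z, φ y z = 0) → y = 0)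
    (u v w p : Fin 3 → ℝ) (h : LinearIndependent ℝ ![u, v, w])
    (h1 : φ p u = 0) (h2 : φ p v = 0) (h3 : φ p w = 0) : p = 0 := by
  apply hnd
  intro t
  obtain ⟨r, s, q, rfl⟩ := stmt13_coords u v w t h
  simp [map_add, map_smul, smul_eq_mul, h1, h2, h3]

private lemma stmt13_licoeff (u v w : Fin 3 → ℝ) (h : LinearIndependent ℝ ![u, v, w])
    {r s q : ℝ} (hrel : r • u + s • v + q • w = 0) : r = 0 ∧ s = 0 ∧ q = 0 := by
  rw [Fintype.linearIndependent_iff] at h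
  have := h ![r, s, q] (by simpa [Fin.sum_univ_three] using hrel)
  exact ⟨this 0, this 1, this 2⟩

private lemma stmt13_core (A B C D E1 E2 E3 F G H x y z α β γ δ : ℝ)
    (hE1 : E1 = G*x + H*y + C*z) (hE2 : E2 = A*x + F*y + G*z) (hE3 : E3 = F*x + B*y + H*z)
    (hD : D = x*E2 + y*E3 + z*E1)
    (q1 : A*B = F^2) (q2 : B*C = H^2) (q3 : C*D = E1^2) (q4 : A*D = E2^2)
    (r1 : α*A + β*F = 0) (r3 : γ*C + δ*E1 = 0)
    (hA : A ≠ 0) (hC : C ≠ 0)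
    (hy : y ≠ 0) (hz : z ≠ 0) (hx : x ≠ 0) :
    (α*δ*y*z + β*γ*x = 0) ∨
      (A*H - F*G = 0 ∧ C*F - G*H = 0 ∧ A*C - G^2 = 0) := by
  have keyz : 2*(A*H - F*G)*y + (A*C - G^2)*z = 0 := by
    have h' : z*(2*(A*H - F*G)*y + (A*C - G^2)*z) = (A*D - E2^2) - (A*B - F^2)*y^2 := by
      rw [hD, hE1, hE2, hE3]; ring
    have h'' : z*(2*(A*H - F*G)*y + (A*C - G^2)*z) = 0 := by rw [h', q4, q1]; ring
    exact (mul_eq_zero.mp h'').resolve_left hz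
  have keyx : 2*(C*F - G*H)*y + (A*C - G^2)*x = 0 := by
    have h' : x*(2*(C*F - G*H)*y + (A*C - G^2)*x) = (C*D - E1^2) - (B*C - H^2)*y^2 := by
      rw [hD, hE1, hE2, hE3]; ring
    have h'' : x*(2*(C*F - G*H)*y + (A*C - G^2)*x) = 0 := by rw [h', q3, q2]; ring
    exact (mul_eq_zero.mp h'').resolve_left hx
  by_cases hN : A*C - G^2 = 0
  · right
    refine ⟨?_, ?_, hN⟩
    · have h0 : (A*H - F*G) * (2*y) = 0 := by rw [hN] at keyz; linarith
      exact (mul_eq_zero.mp h0).resolve_right (by simpa using hy)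
    · have h0 : (C*F - G*H) * (2*y) = 0 := by rw [hN] at keyx; linarith
      exact (mul_eq_zero.mp h0).resolve_right (by simpa using hy)
  · left
    set N := A*C - G^2 with hNdef
    have hzv : N*z = -(2*(A*H - F*G)*y) := by linarith
    have hxv : N*x = -(2*(C*F - G*H)*y) := by linarith
    have hE1v : E1 = -(H*y) := by
      have h' : N*(E1 + H*y) = G*(2*(C*F - G*H)*y + N*x) + C*(2*(A*H - F*G)*y + N*z) := by
        rw [hE1, hNdef]; ring
      rw [keyz, keyx] at h'
      have h0 := mul_eq_zero.mp (by linarith [h'] : N*(E1 + H*y) = 0)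
      rcases h0 with h | h
      · exact absurd h hN
      · linarith
    have hS : F*C*y*z + A*E1*x = 0 := by
      have hfac : A*H*(C*F - G*H) - F*C*(A*H - F*G) = G*(C*F^2 - A*H^2) := by ring
      have hfac2 : C*F^2 - A*H^2 = C*(F^2 - A*B) + A*(B*C - H^2) := by ring
      have hz0 : C*F^2 - A*H^2 = 0 := by rw [hfac2, ← q1, q2]; ring
      have e : N^2*(F*C*y*z + A*E1*x) = (F*C*y*N)*(N*z) + (A*(N*E1))*(N*x) := by ring
      have hNE1 : N*E1 = -(N*(H*y)) := by rw [hE1v]; ring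
      rw [hzv, hNE1, hxv] at e
      have e2 : N^2*(F*C*y*z + A*E1*x) = 2*N*y^2*(A*H*(C*F - G*H) - F*C*(A*H - F*G)) := by
        rw [e]; ring
      rw [hfac, hz0] at e2
      have e3 : N^2*(F*C*y*z + A*E1*x) = 0 := by rw [e2]; ring
      rcases mul_eq_zero.mp e3 with h | h
      · exact absurd (pow_eq_zero_iff (by norm_num) |>.mp h) hN
      · exact h
    have final : A*(C*(α*δ*y*z + β*γ*x)) =
        -(β*δ*(F*C*y*z + A*E1*x)) + (C*δ*y*z)*(α*A + β*F) + (A*β*x)*(γ*C + δ*E1) := by ring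
    rw [r1, r3, hS] at final
    simp only [mul_zero, zero_mul, add_zero, neg_zero, zero_add] at final
    rcases mul_eq_zero.mp final with h | h
    · exact absurd h hA
    rcases mul_eq_zero.mp h with h | h
    · exact absurd h hC
    · exact h



/-- degenerate Brianchon, one pair of opposite sides: for a quadrilateral
with vertices `[a],[b],[c],[d]` circumscribed about a nondegenerate conic, tangent to the
sides `ℓ₁ = ([a],[b])` at `[p₁]` and `ℓ₂ = ([c],[d])` at `[p₂]`, the line joining the
tangency points `[p₁],[p₂]` passes through the intersection point of the two diagonals
`([a],[c])` and `([b],[d])`. -/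
theorem stmt13 (φ : (Fin 3 → ℝ) →ₗ[ℝ] (Fin 3 → ℝ) →ₗ[ℝ] ℝ)
    (hsymm : ∀ y z, φ y z = φ z y)
    (hnd : ∀ y : Fin 3 → ℝ, (∀ z, φ y z = 0) → y = 0)
    (a b c d : Fin 3 → ℝ)
    (hgen₁ : LinearIndependent ℝ ![a, b, c])
    (hgen₂ : LinearIndependent ℝ ![b, c, d])
    (hgen₃ : LinearIndependent ℝ ![c, d, a])
    (hgen₄ : LinearIndependent ℝ ![d, a, b])
    (p₁ p₂ p₃ p₄ : Fin 3 → ℝ)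
    (hp₁ : p₁ ≠ 0) (hp₂ : p₂ ≠ 0) (hp₃ : p₃ ≠ 0) (hp₄ : p₄ ≠ 0)
    -- tangency of side ℓ₁ = ([a],[b]) at [p₁]
    (h₁ : φ p₁ p₁ = 0) (h₁a : φ a p₁ = 0) (h₁b : φ p₁ b = 0)
    -- tangency of side ℓ₃ = ([b],[c]) at [p₃]
    (h₃ : φ p₃ p₃ = 0) (h₃b : φ b p₃ = 0) (h₃c : φ p₃ c = 0)
    -- tangency of side ℓ₂ = ([c],[d]) at [p₂]
    (h₂ : φ p₂ p₂ = 0) (h₂c : φ c p₂ = 0) (h₂d : φ p₂ d = 0)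
    -- tangency of side ℓ₄ = ([d],[a]) at [p₄]
    (h₄ : φ p₄ p₄ = 0) (h₄d : φ d p₄ = 0) (h₄a : φ p₄ a = 0) :
    ∃ m : Fin 3 → ℝ, m ≠ 0 ∧
      m ∈ Submodule.span ℝ ({p₁, p₂} : Set (Fin 3 → ℝ)) ∧
      m ∈ Submodule.span ℝ ({a, c} : Set (Fin 3 → ℝ)) ∧
      m ∈ Submodule.span ℝ ({b, d} : Set (Fin 3 → ℝ)) := by
  have ha0 : a ≠ 0 := by simpa using hgen₁.ne_zero 0
  have hb0 : b ≠ 0 := by simpa using hgen₁.ne_zero 1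
  have hc0 : c ≠ 0 := by simpa using hgen₁.ne_zero 2
  have hd0 : d ≠ 0 := by simpa using hgen₂.ne_zero 2
  -- decompose p₁ = α•a + β•b
  obtain ⟨α, β, ε, hp1d⟩ := stmt13_coords a b c p₁ hgen₁
  have hpa : φ p₁ a = 0 := by rw [hsymm]; exact h₁a
  have hε : ε = 0 := by
    have e : φ p₁ (α•a + β•b + ε•c) = ε * (φ p₁ c) := by
      simp [map_add, map_smul, smul_eq_mul, hpa, h₁b]
    rw [← hp1d, h₁] at e
    rcases mul_eq_zero.mp e.symm with h | h
    · exact h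
    · exact absurd (stmt13_killer φ hnd a b c p₁ hgen₁ hpa h₁b h) hp₁
  rw [hε, zero_smul, add_zero] at hp1d
  subst hp1d
  -- decompose p₂ = γ•c + δ•d
  obtain ⟨γ, δ, ε₂, hp2d⟩ := stmt13_coords c d a p₂ hgen₃
  have hpc2 : φ p₂ c = 0 := by rw [hsymm]; exact h₂c
  have hε₂ : ε₂ = 0 := by
    have e : φ p₂ (γ•c + δ•d + ε₂•a) = ε₂ * (φ p₂ a) := by
      simp [map_add, map_smul, smul_eq_mul, hpc2, h₂d]
    rw [← hp2d, h₂] at e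
    rcases mul_eq_zero.mp e.symm with h | h
    · exact h
    · exact absurd (stmt13_killer φ hnd c d a p₂ hgen₃ hpc2 h₂d h) hp₂
  rw [hε₂, zero_smul, add_zero] at hp2d
  subst hp2d
  -- decompose p₃ = σ•b + τ•c
  obtain ⟨σ, τ, ε₃, hp3d⟩ := stmt13_coords b c d p₃ hgen₂
  have hpb3 : φ p₃ b = 0 := by rw [hsymm]; exact h₃b
  have hε₃ : ε₃ = 0 := by
    have e : φ p₃ (σ•b + τ•c + ε₃•d) = ε₃ * (φ p₃ d) := by
      simp [map_add, map_smul, smul_eq_mul, hpb3, h₃c]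
    rw [← hp3d, h₃] at e
    rcases mul_eq_zero.mp e.symm with h | h
    · exact h
    · exact absurd (stmt13_killer φ hnd b c d p₃ hgen₂ hpb3 h₃c h) hp₃
  rw [hε₃, zero_smul, add_zero] at hp3d
  subst hp3d
  -- decompose p₄ = ρ•d + τ'•a
  obtain ⟨ρ, τ', ε₄, hp4d⟩ := stmt13_coords d a b p₄ hgen₄
  have hpd4 : φ p₄ d = 0 := by rw [hsymm]; exact h₄d
  have hε₄ : ε₄ = 0 := by
    have e : φ p₄ (ρ•d + τ'•a + ε₄•b) = ε₄ * (φ p₄ b) := by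
      simp [map_add, map_smul, smul_eq_mul, hpd4, h₄a]
    rw [← hp4d, h₄] at e
    rcases mul_eq_zero.mp e.symm with h | h
    · exact h
    · exact absurd (stmt13_killer φ hnd d a b p₄ hgen₄ hpd4 h₄a h) hp₄
  rw [hε₄, zero_smul, add_zero] at hp4d
  subst hp4d
  -- coordinates of d
  obtain ⟨x, y, z, hd⟩ := stmt13_coords a b c d hgen₁
  -- scalar linear relations
  have r1 : α*(φ a a) + β*(φ a b) = 0 := by
    simpa [map_add, map_smul, smul_eq_mul] using h₁a
  have r2 : α*(φ a b) + β*(φ b b) = 0 := by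
    simpa [map_add, map_smul, smul_eq_mul] using h₁b
  have r3 : γ*(φ c c) + δ*(φ c d) = 0 := by
    simpa [map_add, map_smul, smul_eq_mul] using h₂c
  have r4 : γ*(φ c d) + δ*(φ d d) = 0 := by
    simpa [map_add, map_smul, smul_eq_mul] using h₂d
  have s1 : σ*(φ b b) + τ*(φ b c) = 0 := by
    simpa [map_add, map_smul, smul_eq_mul] using h₃b
  have s2 : σ*(φ b c) + τ*(φ c c) = 0 := by
    simpa [map_add, map_smul, smul_eq_mul, hsymm b c] using h₃c
  have s3 : ρ*(φ d d) + τ'*(φ a d) = 0 := by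
    simpa [map_add, map_smul, smul_eq_mul, hsymm d a] using h₄d
  have s4 : ρ*(φ a d) + τ'*(φ a a) = 0 := by
    simpa [map_add, map_smul, smul_eq_mul, hsymm d a] using h₄a
  -- x, y, z nonzero
  have hz0 : z ≠ 0 := by
    intro h
    have hrel : (1:ℝ) • d + (-x) • a + (-y) • b = 0 := by
      rw [hd, h]; module
    obtain ⟨h1, -, -⟩ := stmt13_licoeff d a b hgen₄ hrel
    exact one_ne_zero h1
  have hx0 : x ≠ 0 := by
    intro h
    have hrel : (-y) • b + (-z) • c + (1:ℝ) • d = 0 := by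
      rw [hd, h]; module
    obtain ⟨-, -, h1⟩ := stmt13_licoeff b c d hgen₂ hrel
    exact one_ne_zero h1
  have hy0 : y ≠ 0 := by
    intro h
    have hrel : (-z) • c + (1:ℝ) • d + (-x) • a = 0 := by
      rw [hd, h]; module
    obtain ⟨-, h1, -⟩ := stmt13_licoeff c d a hgen₃ hrel
    exact one_ne_zero h1
  -- Gram diagonal entries nonzero
  have hA : φ a a ≠ 0 := by
    intro hA0
    have hF : φ a b = 0 := by
      by_cases hβ : β = 0
      · have hα : α ≠ 0 := by
          intro h; apply hp₁; rw [h, hβ]; simp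
        rw [hβ] at r2
        have := r2
        simp only [mul_zero, zero_mul, add_zero] at this
        exact (mul_eq_zero.mp this).resolve_left hα
      · rw [hA0] at r1
        simp only [mul_zero, zero_add] at r1
        exact (mul_eq_zero.mp r1).resolve_left hβ
    have hE2 : φ a d = 0 := by
      by_cases hρ : ρ = 0
      · have hτ' : τ' ≠ 0 := by
          intro h; apply hp₄; rw [h, hρ]; simp
        rw [hρ] at s3
        simp only [zero_mul, zero_add] at s3
        exact (mul_eq_zero.mp s3).resolve_left hτ'
      · rw [hA0] at s4
        simp only [mul_zero, add_zero] at s4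
        exact (mul_eq_zero.mp s4).resolve_left hρ
    exact ha0 (stmt13_killer φ hnd d a b a hgen₄ hE2 hA0 hF)
  have hB : φ b b ≠ 0 := by
    intro hB0
    have hF : φ a b = 0 := by
      by_cases hα : α = 0
      · have hβ : β ≠ 0 := by
          intro h; apply hp₁; rw [h, hα]; simp
        rw [hα] at r1
        simp only [zero_mul, zero_add] at r1
        exact (mul_eq_zero.mp r1).resolve_left hβ
      · rw [hB0] at r2
        simp only [mul_zero, add_zero] at r2
        exact (mul_eq_zero.mp r2).resolve_left hα
    have hH : φ b c = 0 := by
      by_cases hτ : τ = 0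
      · have hσ : σ ≠ 0 := by
          intro h; apply hp₃; rw [h, hτ]; simp
        rw [hτ] at s2
        simp only [mul_zero, zero_mul, add_zero] at s2
        exact (mul_eq_zero.mp s2).resolve_left hσ
      · rw [hB0] at s1
        simp only [mul_zero, zero_add] at s1
        exact (mul_eq_zero.mp s1).resolve_left hτ
    have hba : φ b a = 0 := by rw [hsymm]; exact hF
    exact hb0 (stmt13_killer φ hnd a b c b hgen₁ hba hB0 hH)
  have hC : φ c c ≠ 0 := by
    intro hC0
    have hE1 : φ c d = 0 := by
      by_cases hδ : δ = 0
      · have hγ : γ ≠ 0 := by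
          intro h; apply hp₂; rw [h, hδ]; simp
        rw [hδ] at r4
        simp only [mul_zero, zero_mul, add_zero] at r4
        exact (mul_eq_zero.mp r4).resolve_left hγ
      · rw [hC0] at r3
        simp only [mul_zero, zero_add] at r3
        exact (mul_eq_zero.mp r3).resolve_left hδ
    have hH : φ b c = 0 := by
      by_cases hσ : σ = 0
      · have hτ : τ ≠ 0 := by
          intro h; apply hp₃; rw [h, hσ]; simp
        rw [hσ] at s1
        simp only [zero_mul, zero_add] at s1
        exact (mul_eq_zero.mp s1).resolve_left hτ
      · rw [hC0] at s2
        simp only [mul_zero, add_zero] at s2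
        exact (mul_eq_zero.mp s2).resolve_left hσ
    have hcb : φ c b = 0 := by rw [hsymm]; exact hH
    exact hc0 (stmt13_killer φ hnd b c d c hgen₂ hcb hC0 hE1)
  have hDD : φ d d ≠ 0 := by
    intro hD0
    have hE1 : φ c d = 0 := by
      by_cases hγ : γ = 0
      · have hδ : δ ≠ 0 := by
          intro h; apply hp₂; rw [h, hγ]; simp
        rw [hγ] at r3
        simp only [zero_mul, zero_add] at r3
        exact (mul_eq_zero.mp r3).resolve_left hδ
      · rw [hD0] at r4
        simp only [mul_zero, add_zero] at r4
        exact (mul_eq_zero.mp r4).resolve_left hγ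
    have hE2 : φ a d = 0 := by
      by_cases hτ' : τ' = 0
      · have hρ : ρ ≠ 0 := by
          intro h; apply hp₄; rw [h, hτ']; simp
        rw [hτ'] at s4
        simp only [zero_mul, add_zero] at s4
        exact (mul_eq_zero.mp s4).resolve_left hρ
      · rw [hD0] at s3
        simp only [mul_zero, zero_add] at s3
        exact (mul_eq_zero.mp s3).resolve_left hτ'
    have hdc : φ d c = 0 := by rw [hsymm]; exact hE1
    have hda : φ d a = 0 := by rw [hsymm]; exact hE2
    exact hd0 (stmt13_killer φ hnd c d a d hgen₃ hdc hD0 hda)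
  -- coefficients nonzero
  have hβ : β ≠ 0 := by
    intro h
    have hα : α ≠ 0 := by intro h'; apply hp₁; rw [h, h']; simp
    rw [h] at r1
    simp only [zero_mul, add_zero] at r1
    exact hA ((mul_eq_zero.mp r1).resolve_left hα)
  have hα : α ≠ 0 := by
    intro h
    rw [h] at r2
    simp only [zero_mul, zero_add] at r2
    exact hB ((mul_eq_zero.mp r2).resolve_left hβ)
  have hδ : δ ≠ 0 := by
    intro h
    have hγ : γ ≠ 0 := by intro h'; apply hp₂; rw [h, h']; simp
    rw [h] at r3
    simp only [zero_mul, add_zero] at r3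
    exact hC ((mul_eq_zero.mp r3).resolve_left hγ)
  have hγ : γ ≠ 0 := by
    intro h
    rw [h] at r4
    simp only [zero_mul, zero_add] at r4
    exact hDD ((mul_eq_zero.mp r4).resolve_left hδ)
  -- quadric relations
  have q1 : (φ a a)*(φ b b) = (φ a b)^2 := by
    have q1' : β*((φ a a)*(φ b b) - (φ a b)^2) = 0 := by
      linear_combination (φ a a)*r2 - (φ a b)*r1
    have := (mul_eq_zero.mp q1').resolve_left hβ
    linarith
  have q2 : (φ b b)*(φ c c) = (φ b c)^2 := by
    by_cases hσ : σ = 0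
    · have hτ : τ ≠ 0 := by intro h; apply hp₃; rw [h, hσ]; simp
      have q2' : τ*((φ b b)*(φ c c) - (φ b c)^2) = 0 := by
        linear_combination (φ b b)*s2 - (φ b c)*s1
      have := (mul_eq_zero.mp q2').resolve_left hτ
      linarith
    · have q2' : σ*((φ b b)*(φ c c) - (φ b c)^2) = 0 := by
        linear_combination (φ c c)*s1 - (φ b c)*s2
      have := (mul_eq_zero.mp q2').resolve_left hσ
      linarith
  have q3 : (φ c c)*(φ d d) = (φ c d)^2 := by
    have q3' : γ*((φ c c)*(φ d d) - (φ c d)^2) = 0 := by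
      linear_combination (φ d d)*r3 - (φ c d)*r4
    have := (mul_eq_zero.mp q3').resolve_left hγ
    linarith
  have q4 : (φ a a)*(φ d d) = (φ a d)^2 := by
    by_cases hρ : ρ = 0
    · have hτ' : τ' ≠ 0 := by intro h; apply hp₄; rw [h, hρ]; simp
      have q4' : τ'*((φ a a)*(φ d d) - (φ a d)^2) = 0 := by
        linear_combination (φ d d)*s4 - (φ a d)*s3
      have := (mul_eq_zero.mp q4').resolve_left hτ'
      linarith
    · have q4' : ρ*((φ a a)*(φ d d) - (φ a d)^2) = 0 := by
        linear_combination (φ a a)*s3 - (φ a d)*s4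
      have := (mul_eq_zero.mp q4').resolve_left hρ
      linarith
  -- expansion identities
  have hE1eq : φ c d = (φ a c)*x + (φ b c)*y + (φ c c)*z := by
    rw [hd]
    simp [map_add, map_smul, smul_eq_mul, hsymm c a, hsymm c b]
    ring
  have hE2eq : φ a d = (φ a a)*x + (φ a b)*y + (φ a c)*z := by
    rw [hd]
    simp [map_add, map_smul, smul_eq_mul]
    ring
  have hE3eq : φ b d = (φ a b)*x + (φ b b)*y + (φ b c)*z := by
    rw [hd]
    simp [map_add, map_smul, smul_eq_mul, hsymm b a]
    ring
  have hDeq : φ d d = x*(φ a d) + y*(φ b d) + z*(φ c d) := by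
    nth_rewrite 1 [hd]
    simp [map_add, map_smul, smul_eq_mul, LinearMap.add_apply, LinearMap.smul_apply,
      hsymm a d, hsymm b d, hsymm c d]
  -- apply the core lemma
  rcases stmt13_core (φ a a) (φ b b) (φ c c) (φ d d) (φ c d) (φ a d) (φ b d)
      (φ a b) (φ a c) (φ b c) x y z α β γ δ hE1eq hE2eq hE3eq hDeq q1 q2 q3 q4 r1 r3
      hA hC hy0 hz0 hx0 with hT | ⟨hK, hL, -⟩
  swap
  · -- degenerate case: contradiction with nondegeneracy
    exfalso
    have hF : φ a b ≠ 0 := by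
      intro h
      rw [h] at q1
      rcases mul_eq_zero.mp (by rw [q1]; ring : (φ a a)*(φ b b) = 0) with h' | h'
      · exact hA h'
      · exact hB h'
    set w : Fin 3 → ℝ := (φ a b) • c - (φ b c) • a with hw
    have hwa : φ w a = 0 := by
      rw [hsymm]
      rw [hw]
      simp [map_sub, map_smul, smul_eq_mul]
      linarith [hK]
    have hwb : φ w b = 0 := by
      rw [hsymm]
      rw [hw]
      simp [map_sub, map_smul, smul_eq_mul, hsymm b a]
      ring
    have hwc : φ w c = 0 := by
      rw [hsymm]
      rw [hw]
      simp [map_sub, map_smul, smul_eq_mul, hsymm c a]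
      linarith [hL]
    have hw0 : w = 0 := stmt13_killer φ hnd a b c w hgen₁ hwa hwb hwc
    have hrel : (-(φ b c)) • a + (0:ℝ) • b + (φ a b) • c = 0 := by
      rw [hw] at hw0
      rw [zero_smul]
      calc (-(φ b c)) • a + 0 + (φ a b) • c
          = (φ a b) • c - (φ b c) • a := by module
        _ = 0 := hw0
    obtain ⟨-, -, h3⟩ := stmt13_licoeff a b c hgen₁ hrel
    exact hF h3
  -- main case
  have hγδz : γ + δ*z ≠ 0 := by
    intro h
    have hGH : (φ a c)*x + (φ b c)*y = 0 := by
      have h' : δ*((φ a c)*x + (φ b c)*y) = 0 := by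
        linear_combination r3 - δ*hE1eq - (φ c c)*h
      exact (mul_eq_zero.mp h').resolve_left hδ
    have hba : α*y - β*x = 0 := by
      have h' : δ*z*(α*y - β*x) = 0 := by
        linear_combination hT - β*x*h
      rcases mul_eq_zero.mp h' with h'' | h''
      · rcases mul_eq_zero.mp h'' with h3 | h3
        · exact absurd h3 hδ
        · exact absurd h3 hz0
      · exact h''
    have hc1 : φ (α•a + β•b) c = 0 := by
      have h' : y*(α*(φ a c) + β*(φ b c)) = 0 := by
        linear_combination β*hGH + (φ a c)*hba
      have h'' := (mul_eq_zero.mp h').resolve_left hy0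
      simp [map_add, map_smul, smul_eq_mul, LinearMap.add_apply, LinearMap.smul_apply]
      linarith [h'']
    exact hp₁ (stmt13_killer φ hnd a b c (α•a + β•b) hgen₁ hpa h₁b hc1)
  refine ⟨(δ*(β*x - α*y)) • a + (β*(γ + δ*z)) • c, ?_, ?_, ?_, ?_⟩
  · intro h
    have hrel : (δ*(β*x - α*y)) • a + (0:ℝ) • b + (β*(γ + δ*z)) • c = 0 := by
      rw [zero_smul]
      calc (δ*(β*x - α*y)) • a + 0 + (β*(γ + δ*z)) • c
          = (δ*(β*x - α*y)) • a + (β*(γ + δ*z)) • c := by rw [add_zero]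
        _ = 0 := h
    obtain ⟨-, -, h3⟩ := stmt13_licoeff a b c hgen₁ hrel
    exact (mul_ne_zero hβ hγδz) h3
  · rw [Submodule.mem_span_pair]
    refine ⟨-(δ*y), β, ?_⟩
    rw [hd]
    match_scalars <;> ring
  · rw [Submodule.mem_span_pair]
    exact ⟨δ*(β*x - α*y), β*(γ + δ*z), rfl⟩
  · rw [Submodule.mem_span_pair]
    refine ⟨-((β*(γ + δ*z))/z)*y, (β*(γ + δ*z))/z, ?_⟩
    rw [hd]
    match_scalars
    all_goals field_simp [hz0]
    all_goals try ring
    all_goals linear_combination hT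
end

section
/- Let φ define a nondegenerate conic in the real projective plane, inscribed in a quadrilateral with vertices [u],[v],[w],[x] and tangency points [α₁u+β₁v], [α₂v+β₂w], [α₃w+β₃x], [α₄x+β₄u] on the four edge-lines (all αᵢ, βᵢ nonzero). Then the line through [α₁u+β₁v] and [α₃w+β₃x], the line through [α₂v+β₂w] and [α₄x+β₄u], and the two diagonals (the line through [u],[w] and the line through [v],[x]) are four concurrent lines. -/
/-!
Take `u, v, w` as a basis and write `x = l u + m v + n w`; then `l u + n w = x - m v` is the
intersection of the diagonals. Tangency says that `φ(tᵢ, ·)` vanishes on the `i`-th edge, so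
each symmetry identity `φ(tᵢ, tⱼ) = φ(tⱼ, tᵢ)` becomes a linear relation between the six
remaining values of the `φ(tᵢ, ·)` at the vertices. Nondegeneracy gives `φ(t₁, w) ≠ 0`, and
eliminating the six values leaves `α₁ β₃ m n + α₃ β₁ l = 0`, which says exactly that
`l u + n w` lies on the chord `t₁ t₃`. The chord `t₂ t₄` follows by relabelling the
quadrilateral cyclically, which fixes the intersection of the diagonals.
-/

open Submodule

section Scalar

variable {K : Type*} [Field K]

/-- The hypotheses `h..` are the identities `φ(tᵢ, tⱼ) = φ(tⱼ, tᵢ)` of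
`chord_relation_of_tangent_edges`, in which `A, B, C, C', D, D'` stand for
`φ(t₁, w), φ(t₂, u), φ(t₃, u), φ(t₃, v), φ(t₄, v), φ(t₄, w)`. -/
theorem tangential_quadrilateral_coeff_relations
    {α₁ β₁ α₂ β₂ α₃ β₃ α₄ β₄ l m n A B C C' D D' : K}
    (hl : l ≠ 0) (hm : m ≠ 0) (hn : n ≠ 0) (hA : A ≠ 0)
    (h12 : α₁ * B = β₂ * A) (h13 : α₁ * C + β₁ * C' = α₃ * A + β₃ * (n * A))
    (h14 : β₁ * D = α₄ * (n * A)) (h23 : α₂ * C' = β₃ * (l * B))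
    (h24 : α₂ * D + β₂ * D' = α₄ * (l * B) + β₄ * B) (h34 : α₃ * D' = β₄ * C)
    (h3 : l * C + m * C' = 0) (h4 : m * D + n * D' = 0) :
    β₁ * β₂ * β₃ * β₄ = α₁ * α₂ * α₃ * α₄ ∧
    α₁ * α₂ * (α₃ + β₃ * n) = β₂ * β₃ * (β₁ * l - α₁ * m) ∧
    β₁ * β₂ * (α₄ * l + β₄) = α₁ * α₄ * (α₂ * n - β₂ * m) := by
  refine ⟨?_, ?_, ?_⟩
  · have e : n * β₄ * C' = l * α₃ * D := by
      refine mul_left_cancel₀ hm ?_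
      linear_combination n * β₄ * h3 - l * α₃ * h4 + l * n * h34
    refine mul_left_cancel₀ (mul_ne_zero (mul_ne_zero hl hn) hA) ?_
    linear_combination α₁ * α₂ * β₁ * e - l * n * β₁ * β₃ * β₄ * h12 - α₁ * n * β₁ * β₄ * h23
      + α₁ * α₂ * α₃ * l * h14
  · refine mul_left_cancel₀ (mul_ne_zero hl hA) ?_
    linear_combination α₁ ^ 2 * α₂ * h3 - l * α₁ * α₂ * h13 + α₁ * (β₁ * l - α₁ * m) * h23
      + (β₁ * l - α₁ * m) * β₃ * l * h12
  · refine mul_left_cancel₀ (mul_ne_zero hn hA) ?_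
    linear_combination α₁ * β₁ * β₂ * h4 - n * α₁ * β₁ * h24 + α₁ * (α₂ * n - β₂ * m) * h14
      - n * β₁ * (α₄ * l + β₄) * h12

theorem tangential_quadrilateral_chord_relation [NeZero (2 : K)]
    {α₁ β₁ α₂ β₂ α₃ β₃ α₄ β₄ l m n : K}
    (hα₁ : α₁ ≠ 0) (hβ₂ : β₂ ≠ 0) (hβ₃ : β₃ ≠ 0) (hα₄ : α₄ ≠ 0)
    (hk : β₁ * β₂ * β₃ * β₄ = α₁ * α₂ * α₃ * α₄)
    (h13 : α₁ * α₂ * (α₃ + β₃ * n) = β₂ * β₃ * (β₁ * l - α₁ * m))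
    (h24 : β₁ * β₂ * (α₄ * l + β₄) = α₁ * α₄ * (α₂ * n - β₂ * m)) :
    α₁ * β₃ * m * n + α₃ * β₁ * l = 0 := by
  -- the sum and the difference of `α₄ • h13` and `β₃ • h24` isolate `m` and `l`, thanks to `hk`
  have hm : β₂ * β₃ * m = -(α₂ * α₃) := by
    refine mul_left_cancel₀ (mul_ne_zero (mul_ne_zero two_ne_zero hα₁) hα₄) ?_
    linear_combination α₄ * h13 + β₃ * h24 - hk
  have hl : β₁ * β₂ * l = α₁ * α₂ * n := by
    refine mul_left_cancel₀ (mul_ne_zero (mul_ne_zero two_ne_zero hβ₃) hα₄) ?_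
    linear_combination β₃ * h24 - α₄ * h13 - hk
  refine mul_left_cancel₀ hβ₂ ?_
  linear_combination α₁ * n * hm + α₃ * hl

end Scalar

section Coordinates

variable {K V : Type*} [Field K] [AddCommGroup V] [Module K V]

theorem LinearIndependent.eq_zero_of_smul_add_smul_add_smul {a b c : V}
    (h : LinearIndependent K ![a, b, c]) {r s t : K} (hrst : r • a + s • b + t • c = 0) :
    r = 0 ∧ s = 0 ∧ t = 0 := by
  have := Fintype.linearIndependent_iff.mp h ![r, s, t] (by simpa [Fin.sum_univ_three] using hrst)
  exact ⟨this 0, this 1, this 2⟩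

theorem LinearIndependent.smul_add_smul_ne_zero {a b c : V} (h : LinearIndependent K ![a, b, c])
    {r s : K} (hr : r ≠ 0) : r • a + s • b ≠ 0 := fun h0 =>
  hr (h.eq_zero_of_smul_add_smul_add_smul (t := 0) (by simpa using h0)).1

theorem exists_eq_smul_add_smul_add_smul_of_linearIndependent (hV : Module.finrank K V = 3)
    {u v w x : V} (h₁ : LinearIndependent K ![u, v, w]) (h₂ : LinearIndependent K ![v, w, x])
    (h₃ : LinearIndependent K ![w, x, u]) (h₄ : LinearIndependent K ![x, u, v]) :
    ∃ l m n : K, l ≠ 0 ∧ m ≠ 0 ∧ n ≠ 0 ∧ x = l • u + m • v + n • w := by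
  have hspan := h₁.span_eq_top_of_card_eq_finrank (by simp [hV])
  obtain ⟨c, hc⟩ := (mem_span_range_iff_exists_fun K).mp (hspan ▸ mem_top : x ∈ _)
  simp only [Fin.sum_univ_three, Matrix.cons_val_zero, Matrix.cons_val_one,
    Matrix.cons_val_two, Matrix.head_cons, Matrix.tail_cons] at hc
  refine ⟨c 0, c 1, c 2, fun h0 => ?_, fun h0 => ?_, fun h0 => ?_, hc.symm⟩
  · have := (h₂.eq_zero_of_smul_add_smul_add_smul (r := c 1) (s := c 2) (t := -1)
      (by rw [← hc, h0]; module)).2.2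
    norm_num at this
  · have := (h₃.eq_zero_of_smul_add_smul_add_smul (r := c 2) (s := -1) (t := c 0)
      (by rw [← hc, h0]; module)).2.1
    norm_num at this
  · have := (h₄.eq_zero_of_smul_add_smul_add_smul (r := -1) (s := c 0) (t := c 1)
      (by rw [← hc, h0]; module)).1
    norm_num at this

end Coordinates

section Conic

variable {K V : Type*} [Field K] [AddCommGroup V] [Module K V] {φ : V →ₗ[K] V →ₗ[K] K}

theorem smul_apply_add_smul_apply_comm (hφ : ∀ y z, φ y z = φ z y) {s t p q r z : V}
    {a b c d : K} (hs : s = a • p + b • q) (ht : t = c • r + d • z) :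
    a * φ t p + b * φ t q = c * φ s r + d * φ s z :=
  calc a * φ t p + b * φ t q = φ t s := by rw [hs]; simp
    _ = φ s t := hφ t s
    _ = c * φ s r + d * φ s z := by rw [ht]; simp

theorem LinearMap.SeparatingLeft.apply_ne_zero_of_span_eq_top (hsep : φ.SeparatingLeft)
    {u v w t : V} (hspan : span K (Set.range ![u, v, w]) = ⊤) (ht : t ≠ 0)
    (hu : φ t u = 0) (hv : φ t v = 0) : φ t w ≠ 0 := fun hw =>
  ht <| hsep t fun y => by
    rw [LinearMap.ext_on_range hspan (f := φ t) (g := 0) fun i => by fin_cases i <;> simpa]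
    rfl

theorem chord_relation_of_tangent_edges [NeZero (2 : K)] (hφ : ∀ y z, φ y z = φ z y)
    {u v w x : V} {l m n : K} (hl : l ≠ 0) (hm : m ≠ 0) (hn : n ≠ 0)
    (hx : x = l • u + m • v + n • w) {α₁ β₁ α₂ β₂ α₃ β₃ α₄ β₄ : K}
    (hα₁ : α₁ ≠ 0) (hβ₂ : β₂ ≠ 0) (hβ₃ : β₃ ≠ 0) (hα₄ : α₄ ≠ 0)
    (hA : φ (α₁ • u + β₁ • v) w ≠ 0)
    (h₁u : φ (α₁ • u + β₁ • v) u = 0) (h₁v : φ (α₁ • u + β₁ • v) v = 0)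
    (h₂v : φ (α₂ • v + β₂ • w) v = 0) (h₂w : φ (α₂ • v + β₂ • w) w = 0)
    (h₃w : φ (α₃ • w + β₃ • x) w = 0) (h₃x : φ (α₃ • w + β₃ • x) x = 0)
    (h₄x : φ (α₄ • x + β₄ • u) x = 0) (h₄u : φ (α₄ • x + β₄ • u) u = 0) :
    α₁ * β₃ * m * n + α₃ * β₁ * l = 0 := by
  set t₁ := α₁ • u + β₁ • v with ht₁
  set t₂ := α₂ • v + β₂ • w with ht₂
  set t₃ := α₃ • w + β₃ • x with ht₃
  set t₄ := α₄ • x + β₄ • u with ht₄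
  have h₁x : φ t₁ x = n * φ t₁ w := by rw [hx]; simp [h₁u, h₁v]
  have h₂x : φ t₂ x = l * φ t₂ u := by rw [hx]; simp [h₂v, h₂w]
  have h₃x' : l * φ t₃ u + m * φ t₃ v = 0 := by rw [hx] at h₃x; simpa [h₃w] using h₃x
  have h₄x' : m * φ t₄ v + n * φ t₄ w = 0 := by rw [hx] at h₄x; simpa [h₄u] using h₄x
  have r₁₂ := smul_apply_add_smul_apply_comm hφ ht₁ ht₂
  have r₁₃ := smul_apply_add_smul_apply_comm hφ ht₁ ht₃
  have r₁₄ := smul_apply_add_smul_apply_comm hφ ht₁ ht₄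
  have r₂₃ := smul_apply_add_smul_apply_comm hφ ht₂ ht₃
  have r₂₄ := smul_apply_add_smul_apply_comm hφ ht₂ ht₄
  have r₃₄ := smul_apply_add_smul_apply_comm hφ ht₃ ht₄
  simp only [h₁u, h₁v, h₂v, h₂w, h₃w, h₃x, h₄x, h₄u, h₁x, h₂x, mul_zero, add_zero, zero_add]
    at r₁₂ r₁₃ r₁₄ r₂₃ r₂₄ r₃₄
  obtain ⟨hk, h₁₃, h₂₄⟩ :=
    tangential_quadrilateral_coeff_relations hl hm hn hA r₁₂ r₁₃ r₁₄ r₂₃ r₂₄ r₃₄ h₃x' h₄x'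
  exact tangential_quadrilateral_chord_relation hα₁ hβ₂ hβ₃ hα₄ hk h₁₃ h₂₄

theorem span_diagonals_inf_le_span_chord [NeZero (2 : K)] (hV : Module.finrank K V = 3)
    (hφ : ∀ y z, φ y z = φ z y) (hsep : φ.SeparatingLeft) {u v w x : V}
    (h₁ : LinearIndependent K ![u, v, w]) (h₂ : LinearIndependent K ![v, w, x])
    (h₃ : LinearIndependent K ![w, x, u]) (h₄ : LinearIndependent K ![x, u, v])
    {α₁ β₁ α₂ β₂ α₃ β₃ α₄ β₄ : K}
    (hα₁ : α₁ ≠ 0) (hβ₂ : β₂ ≠ 0) (hβ₃ : β₃ ≠ 0) (hα₄ : α₄ ≠ 0)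
    (h₁u : φ (α₁ • u + β₁ • v) u = 0) (h₁v : φ (α₁ • u + β₁ • v) v = 0)
    (h₂v : φ (α₂ • v + β₂ • w) v = 0) (h₂w : φ (α₂ • v + β₂ • w) w = 0)
    (h₃w : φ (α₃ • w + β₃ • x) w = 0) (h₃x : φ (α₃ • w + β₃ • x) x = 0)
    (h₄x : φ (α₄ • x + β₄ • u) x = 0) (h₄u : φ (α₄ • x + β₄ • u) u = 0) :
    span K {u, w} ⊓ span K {v, x} ≤ span K {α₁ • u + β₁ • v, α₃ • w + β₃ • x} := by
  obtain ⟨l, m, n, hl, hm, hn, hx⟩ :=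
    exists_eq_smul_add_smul_add_smul_of_linearIndependent hV h₁ h₂ h₃ h₄
  have hA : φ (α₁ • u + β₁ • v) w ≠ 0 := hsep.apply_ne_zero_of_span_eq_top
    (h₁.span_eq_top_of_card_eq_finrank (by simp [hV])) (h₁.smul_add_smul_ne_zero hα₁) h₁u h₁v
  have hC := chord_relation_of_tangent_edges hφ hl hm hn hx hα₁ hβ₂ hβ₃ hα₄ hA
    h₁u h₁v h₂v h₂w h₃w h₃x h₄x h₄u
  set t₁ := α₁ • u + β₁ • v with ht₁
  set t₃ := α₃ • w + β₃ • x with ht₃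
  have hid : (β₁ * (α₃ + β₃ * n)) • (l • u + n • w) = n • (β₁ • t₃ - (β₃ * m) • t₁) := by
    rw [ht₁, ht₃, hx]
    linear_combination (norm := module) hC • u
  have hc : β₁ * (α₃ + β₃ * n) ≠ 0 := by
    intro h0
    have := congrArg (fun y => φ y w) hid
    simp [h0, h₃w, hA, hβ₃, hm, hn] at this
  intro P hP
  rw [mem_inf, mem_span_pair, mem_span_pair] at hP
  obtain ⟨⟨a, b, hPuw⟩, ⟨a', b', hPvx⟩⟩ := hP
  have hP : P = b' • (l • u + n • w) := by
    rw [hx] at hPvx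
    obtain ⟨ha, -, hb⟩ := h₁.eq_zero_of_smul_add_smul_add_smul (r := a - b' * l)
      (s := -(a' + b' * m)) (t := b - b' * n) (by linear_combination (norm := module) hPuw - hPvx)
    rw [← hPuw, sub_eq_zero.mp ha, sub_eq_zero.mp hb]
    module
  rw [hP, ← inv_smul_smul₀ hc (l • u + n • w), hid]
  exact smul_mem _ _ <| smul_mem _ _ <| smul_mem _ _ <|
    mem_span_pair.mpr ⟨-(β₃ * m), β₁, by module⟩

end Conic

theorem stmt14_general (φ : (Fin 3 → ℝ) →ₗ[ℝ] (Fin 3 → ℝ) →ₗ[ℝ] ℝ)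
    (hsymm : ∀ y z, φ y z = φ z y)
    (hnd : ∀ y : Fin 3 → ℝ, (∀ z, φ y z = 0) → y = 0)
    (u v w x : Fin 3 → ℝ)
    (hgen₁ : LinearIndependent ℝ ![u, v, w])
    (hgen₂ : LinearIndependent ℝ ![v, w, x])
    (hgen₃ : LinearIndependent ℝ ![w, x, u])
    (hgen₄ : LinearIndependent ℝ ![x, u, v])
    (α₁ β₁ α₂ β₂ α₃ β₃ α₄ β₄ : ℝ)
    (hα₁ : α₁ ≠ 0) (hα₂ : α₂ ≠ 0) (hβ₂ : β₂ ≠ 0)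
    (hβ₃ : β₃ ≠ 0) (hα₄ : α₄ ≠ 0) (hβ₄ : β₄ ≠ 0)
    (h₁u : φ u (α₁ • u + β₁ • v) = 0) (h₁v : φ (α₁ • u + β₁ • v) v = 0)
    (h₂v : φ v (α₂ • v + β₂ • w) = 0) (h₂w : φ (α₂ • v + β₂ • w) w = 0)
    (h₃w : φ w (α₃ • w + β₃ • x) = 0) (h₃x : φ (α₃ • w + β₃ • x) x = 0)
    (h₄x : φ x (α₄ • x + β₄ • u) = 0) (h₄u : φ (α₄ • x + β₄ • u) u = 0) :
    ∃ m : Fin 3 → ℝ, m ≠ 0 ∧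
      m ∈ Submodule.span ℝ ({α₁ • u + β₁ • v, α₃ • w + β₃ • x} : Set (Fin 3 → ℝ)) ∧
      m ∈ Submodule.span ℝ ({α₂ • v + β₂ • w, α₄ • x + β₄ • u} : Set (Fin 3 → ℝ)) ∧
      m ∈ Submodule.span ℝ ({u, w} : Set (Fin 3 → ℝ)) ∧
      m ∈ Submodule.span ℝ ({v, x} : Set (Fin 3 → ℝ)) := by
  have hV : Module.finrank ℝ (Fin 3 → ℝ) = 3 := Module.finrank_fin_fun ℝ
  have h₁u' := (hsymm _ _).trans h₁u
  have h₂v' := (hsymm _ _).trans h₂v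
  have h₃w' := (hsymm _ _).trans h₃w
  have h₄x' := (hsymm _ _).trans h₄x
  obtain ⟨l, m, n, hl, -, -, hx⟩ :=
    exists_eq_smul_add_smul_add_smul_of_linearIndependent hV hgen₁ hgen₂ hgen₃ hgen₄
  have hP : l • u + n • w ∈ span ℝ {u, w} ⊓ span ℝ {v, x} :=
    ⟨mem_span_pair.mpr ⟨l, n, rfl⟩, mem_span_pair.mpr ⟨-m, 1, by rw [hx]; module⟩⟩
  refine ⟨l • u + n • w, fun h0 => hl ?_, ?_, ?_, hP.1, hP.2⟩
  · exact (hgen₁.eq_zero_of_smul_add_smul_add_smul (s := 0) (by simpa using h0)).1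
  · exact span_diagonals_inf_le_span_chord hV hsymm hnd hgen₁ hgen₂ hgen₃ hgen₄ hα₁ hβ₂ hβ₃ hα₄
      h₁u' h₁v h₂v' h₂w h₃w' h₃x h₄x' h₄u hP
  · refine span_diagonals_inf_le_span_chord hV hsymm hnd hgen₂ hgen₃ hgen₄ hgen₁ hα₂ hβ₃ hβ₄ hα₁
      h₂v' h₂w h₃w' h₃x h₄x' h₄u h₁u' h₁v ?_
    rwa [inf_comm, Set.pair_comm w u]

/-- for a nondegenerate conic inscribed in the quadrilateral
`[u],[v],[w],[x]` with tangency points `[α₁u+β₁v], [α₂v+β₂w], [α₃w+β₃x], [α₄x+β₄u]`,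
the line through the first and third tangency points, the line through the second and
fourth tangency points, and the two diagonals are four concurrent lines. -/
theorem stmt14 (φ : (Fin 3 → ℝ) →ₗ[ℝ] (Fin 3 → ℝ) →ₗ[ℝ] ℝ)
    (hsymm : ∀ y z, φ y z = φ z y)
    (hnd : ∀ y : Fin 3 → ℝ, (∀ z, φ y z = 0) → y = 0)
    (u v w x : Fin 3 → ℝ)
    (hgen₁ : LinearIndependent ℝ ![u, v, w])
    (hgen₂ : LinearIndependent ℝ ![v, w, x])
    (hgen₃ : LinearIndependent ℝ ![w, x, u])
    (hgen₄ : LinearIndependent ℝ ![x, u, v])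
    (α₁ β₁ α₂ β₂ α₃ β₃ α₄ β₄ : ℝ)
    (hα₁ : α₁ ≠ 0) (hβ₁ : β₁ ≠ 0) (hα₂ : α₂ ≠ 0) (hβ₂ : β₂ ≠ 0)
    (hα₃ : α₃ ≠ 0) (hβ₃ : β₃ ≠ 0) (hα₄ : α₄ ≠ 0) (hβ₄ : β₄ ≠ 0)
    (h₁ : φ (α₁ • u + β₁ • v) (α₁ • u + β₁ • v) = 0)
    (h₁u : φ u (α₁ • u + β₁ • v) = 0) (h₁v : φ (α₁ • u + β₁ • v) v = 0)
    (h₂ : φ (α₂ • v + β₂ • w) (α₂ • v + β₂ • w) = 0)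
    (h₂v : φ v (α₂ • v + β₂ • w) = 0) (h₂w : φ (α₂ • v + β₂ • w) w = 0)
    (h₃ : φ (α₃ • w + β₃ • x) (α₃ • w + β₃ • x) = 0)
    (h₃w : φ w (α₃ • w + β₃ • x) = 0) (h₃x : φ (α₃ • w + β₃ • x) x = 0)
    (h₄ : φ (α₄ • x + β₄ • u) (α₄ • x + β₄ • u) = 0)
    (h₄x : φ x (α₄ • x + β₄ • u) = 0) (h₄u : φ (α₄ • x + β₄ • u) u = 0) :
    ∃ m : Fin 3 → ℝ, m ≠ 0 ∧
      m ∈ Submodule.span ℝ ({α₁ • u + β₁ • v, α₃ • w + β₃ • x} : Set (Fin 3 → ℝ)) ∧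
      m ∈ Submodule.span ℝ ({α₂ • v + β₂ • w, α₄ • x + β₄ • u} : Set (Fin 3 → ℝ)) ∧
      m ∈ Submodule.span ℝ ({u, w} : Set (Fin 3 → ℝ)) ∧
      m ∈ Submodule.span ℝ ({v, x} : Set (Fin 3 → ℝ)) :=
  stmt14_general φ hsymm hnd u v w x hgen₁ hgen₂ hgen₃ hgen₄ α₁ β₁ α₂ β₂ α₃ β₃ α₄ β₄ hα₁ hα₂ hβ₂ hβ₃
    hα₄ hβ₄ h₁u h₁v h₂v h₂w h₃w h₃x h₄x h₄u
end

section
/- Let u, v, w be a basis of ℝ³, γ ≠ 0, and x = γ·u − v + γ·w, so that [u+w] = [v+x] =: [r] is the intersection of the diagonals of the quadrilateral [u],[v],[w],[x]. Then for every nonzero λ, the point [r] together with the pairs of tangency points forms a Ceva configuration on each of the four triangles: the lines ([u], [λv+w]), ([w], [u+λv]), ([v], [r]) are concurrent; the lines ([v], [w+λx]), ([x], [λv+w]), ([w], [r]) are concurrent; the lines ([w], [λx+u]), ([u], [w+λx]), ([x], [r]) are concurrent; and the lines ([x], [u+λv]), ([v], [λx+u]), ([u], [r]) are concurrent. -/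
/-- the diagonal intersection point `[r] = [u+w] = [v+x]` is a common point
of the four Ceva configurations determined by the tangency points
`[u+λv], [λv+w], [w+λx], [λx+u]` on the four triangles of the quadrilateral. -/
theorem stmt15 (u v w : Fin 3 → ℝ)
    (hb : LinearIndependent ℝ ![u, v, w])
    (hsp : Submodule.span ℝ ({u, v, w} : Set (Fin 3 → ℝ)) = ⊤)
    (γ : ℝ) (hγ : γ ≠ 0) (x : Fin 3 → ℝ) (hx : x = γ • u - v + γ • w)
    (r : Fin 3 → ℝ) (hr : r = u + w)
    (l : ℝ) (hl : l ≠ 0) :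
    (∃ m : Fin 3 → ℝ, m ≠ 0 ∧
        m ∈ Submodule.span ℝ ({u, l • v + w} : Set (Fin 3 → ℝ)) ∧
        m ∈ Submodule.span ℝ ({w, u + l • v} : Set (Fin 3 → ℝ)) ∧
        m ∈ Submodule.span ℝ ({v, r} : Set (Fin 3 → ℝ))) ∧
    (∃ m : Fin 3 → ℝ, m ≠ 0 ∧
        m ∈ Submodule.span ℝ ({v, w + l • x} : Set (Fin 3 → ℝ)) ∧
        m ∈ Submodule.span ℝ ({x, l • v + w} : Set (Fin 3 → ℝ)) ∧
        m ∈ Submodule.span ℝ ({w, r} : Set (Fin 3 → ℝ))) ∧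
    (∃ m : Fin 3 → ℝ, m ≠ 0 ∧
        m ∈ Submodule.span ℝ ({w, l • x + u} : Set (Fin 3 → ℝ)) ∧
        m ∈ Submodule.span ℝ ({u, w + l • x} : Set (Fin 3 → ℝ)) ∧
        m ∈ Submodule.span ℝ ({x, r} : Set (Fin 3 → ℝ))) ∧
    (∃ m : Fin 3 → ℝ, m ≠ 0 ∧
        m ∈ Submodule.span ℝ ({x, u + l • v} : Set (Fin 3 → ℝ)) ∧
        m ∈ Submodule.span ℝ ({v, l • x + u} : Set (Fin 3 → ℝ)) ∧
        m ∈ Submodule.span ℝ ({u, r} : Set (Fin 3 → ℝ))) := by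
  have key : ∀ a b c : ℝ, a • u + b • v + c • w = 0 → a = 0 ∧ b = 0 ∧ c = 0 := by
    intro a b c h
    have h2 := Fintype.linearIndependent_iff.mp hb ![a, b, c]
      (by simpa [Fin.sum_univ_three] using h)
    exact ⟨h2 0, h2 1, h2 2⟩
  have hlγ : l * γ ≠ 0 := mul_ne_zero hl hγ
  subst hx hr
  refine ⟨⟨u + l • v + w, ?_, ?_, ?_, ?_⟩,
          ⟨(l * γ) • u + (1 + l * γ) • w, ?_, ?_, ?_, ?_⟩,
          ⟨(1 + l * γ) • u + (-l) • v + (1 + l * γ) • w, ?_, ?_, ?_, ?_⟩,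
          ⟨(1 + l * γ) • u + (l * γ) • w, ?_, ?_, ?_, ?_⟩⟩
  · intro h0
    have h' : (1 : ℝ) • u + l • v + (1 : ℝ) • w = 0 := by rw [← h0]; module
    exact one_ne_zero (key 1 l 1 h').1
  · exact Submodule.mem_span_pair.mpr ⟨1, 1, by module⟩
  · exact Submodule.mem_span_pair.mpr ⟨1, 1, by module⟩
  · exact Submodule.mem_span_pair.mpr ⟨l, 1, by module⟩
  · intro h0
    have h' : (l * γ) • u + (0 : ℝ) • v + (1 + l * γ) • w = 0 := by rw [← h0]; module
    exact hlγ (key _ _ _ h').1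
  · exact Submodule.mem_span_pair.mpr ⟨l, 1, by module⟩
  · exact Submodule.mem_span_pair.mpr ⟨l, 1, by module⟩
  · exact Submodule.mem_span_pair.mpr ⟨1, l * γ, by module⟩
  · intro h0
    have h' : (1 + l * γ) • u + (-l) • v + (1 + l * γ) • w = 0 := by rw [← h0]
    have := (key _ _ _ h').2.1
    exact hl (by linarith [neg_eq_zero.mp this])
  · exact Submodule.mem_span_pair.mpr ⟨1, 1, by module⟩
  · exact Submodule.mem_span_pair.mpr ⟨1, 1, by module⟩
  · exact Submodule.mem_span_pair.mpr ⟨l, 1, by module⟩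
  · intro h0
    have h' : (1 + l * γ) • u + (0 : ℝ) • v + (l * γ) • w = 0 := by rw [← h0]; module
    exact hlγ (key _ _ _ h').2.2
  · exact Submodule.mem_span_pair.mpr ⟨l, 1, by module⟩
  · exact Submodule.mem_span_pair.mpr ⟨l, 1, by module⟩
  · exact Submodule.mem_span_pair.mpr ⟨1, l * γ, by module⟩
end

section
/- Let k₀, k₁ be two distinct lines in the real projective plane and l₀, l₁, ..., l_n (n ≥ 2) further lines such that each quadruple k₀, l_{i−1}, k₁, l_i is generic (no three concurrent). Suppose there is a nondegenerate conic tangent to all of k₀, k₁, l₀, ..., l_n, with tangency points p₀ ∈ k₀ and p₁ ∈ k₁. Then for each i ∈ {1, ..., n}, the intersection point r_i of the diagonals of the quadrilateral formed by k₀, l_{i−1}, k₁, l_i lies on the line through p₀ and p₁; in particular all the points r₁, ..., r_n are collinear on a line not through k₀ ∩ k₁. -/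
open Submodule Module


/-- if the lines `k₀, k₁, l₀, …, l_n` (given as the polars of the conic
points `p₀, p₁, q 0, …, q n` of a nondegenerate conic) are pairwise generic, then the
diagonal intersection point of each quadrilateral `(k₀, l_{i−1}, k₁, l_i)` lies on the
line through the tangency points `[p₀], [p₁]`; moreover this line does not pass through
`k₀ ∩ k₁`. -/
theorem stmt17 (φ : (Fin 3 → ℝ) →ₗ[ℝ] (Fin 3 → ℝ) →ₗ[ℝ] ℝ)
    (hsymm : ∀ y z, φ y z = φ z y)
    (hnd : ∀ y : Fin 3 → ℝ, (∀ z, φ y z = 0) → y = 0)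
    (n : ℕ) (hn : 2 ≤ n)
    (p₀ p₁ : Fin 3 → ℝ) (hp₀ : p₀ ≠ 0) (hp₁ : p₁ ≠ 0)
    (hp : Submodule.span ℝ ({p₀} : Set (Fin 3 → ℝ)) ≠
        Submodule.span ℝ ({p₁} : Set (Fin 3 → ℝ)))
    (hc₀ : φ p₀ p₀ = 0) (hc₁ : φ p₁ p₁ = 0)
    (q : Fin (n + 1) → Fin 3 → ℝ)
    (hq : ∀ i, q i ≠ 0) (hqc : ∀ i, φ (q i) (q i) = 0)
    -- genericity: no three of the lines k₀, k₁, l_{i-1}, l_i are concurrent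
    (hgen : ∀ (i : Fin n) (z : Fin 3 → ℝ), z ≠ 0 →
        ¬ (φ p₀ z = 0 ∧ φ p₁ z = 0 ∧ φ (q i.castSucc) z = 0) ∧
        ¬ (φ p₀ z = 0 ∧ φ p₁ z = 0 ∧ φ (q i.succ) z = 0) ∧
        ¬ (φ p₀ z = 0 ∧ φ (q i.castSucc) z = 0 ∧ φ (q i.succ) z = 0) ∧
        ¬ (φ p₁ z = 0 ∧ φ (q i.castSucc) z = 0 ∧ φ (q i.succ) z = 0)) :
    (∀ (i : Fin n) (A B C D r : Fin 3 → ℝ),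
        A ≠ 0 → B ≠ 0 → C ≠ 0 → D ≠ 0 → r ≠ 0 →
        -- A = k₀ ∩ l_{i-1}, B = k₀ ∩ l_i, C = k₁ ∩ l_i, D = k₁ ∩ l_{i-1}
        φ p₀ A = 0 → φ (q i.castSucc) A = 0 →
        φ p₀ B = 0 → φ (q i.succ) B = 0 →
        φ p₁ C = 0 → φ (q i.succ) C = 0 →
        φ p₁ D = 0 → φ (q i.castSucc) D = 0 →
        r ∈ Submodule.span ℝ ({A, C} : Set (Fin 3 → ℝ)) →
        r ∈ Submodule.span ℝ ({B, D} : Set (Fin 3 → ℝ)) →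
        r ∈ Submodule.span ℝ ({p₀, p₁} : Set (Fin 3 → ℝ))) ∧
    (∀ z : Fin 3 → ℝ, z ≠ 0 → φ p₀ z = 0 → φ p₁ z = 0 →
        z ∉ Submodule.span ℝ ({p₀, p₁} : Set (Fin 3 → ℝ))) := by
  classical
  have hs01 : φ p₁ p₀ = φ p₀ p₁ := hsymm p₁ p₀
  have hfr3 : finrank ℝ (Fin 3 → ℝ) = 3 := by simp
  -- independence of p₀, p₁
  have hind : ∀ a b : ℝ, a • p₀ + b • p₁ = 0 → a = 0 ∧ b = 0 := by
    intro a b hab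
    have hb : b = 0 := by
      by_contra hb
      have h2 : b • p₁ = -(a • p₀) := by rwa [add_comm, add_eq_zero_iff_eq_neg] at hab
      have h3 : p₁ = (b⁻¹ * (-a)) • p₀ := by
        rw [mul_smul, neg_smul, ← h2, inv_smul_smul₀ hb]
      have ht : (b⁻¹ * (-a)) ≠ 0 := by
        intro h0
        rw [h0, zero_smul] at h3
        exact hp₁ h3
      apply hp
      rw [show ({p₁} : Set (Fin 3 → ℝ)) = {(b⁻¹ * (-a)) • p₀} by rw [← h3],
        Submodule.span_singleton_smul_eq (IsUnit.mk0 _ ht)]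
    refine ⟨?_, hb⟩
    rw [hb, zero_smul, add_zero, smul_eq_zero] at hab
    exact hab.resolve_right hp₀
  have hLI : LinearIndependent ℝ ![p₀, p₁] := LinearIndependent.pair_iff.2 hind
  -- spanning lemma
  have hspan3 : ∀ x : Fin 3 → ℝ, x ∉ span ℝ ({p₀, p₁} : Set (Fin 3 → ℝ)) →
      span ℝ ({x, p₀, p₁} : Set (Fin 3 → ℝ)) = ⊤ := by
    intro x hx
    have h1 : LinearIndependent ℝ (Fin.cons x ![p₀, p₁] : Fin 3 → Fin 3 → ℝ) := by
      rw [linearIndependent_fin_cons]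
      refine ⟨hLI, ?_⟩
      have hrange : Set.range ![p₀, p₁] = ({p₀, p₁} : Set (Fin 3 → ℝ)) := by
        ext u
        simp [Matrix.range_cons, Matrix.range_empty]
        tauto
      rw [hrange]
      exact hx
    have h2 := h1.span_eq_top_of_card_eq_finrank (by simp [hfr3])
    rw [← h2]
    congr 1
    ext u
    simp [Fin.range_cons, Matrix.range_cons, Matrix.range_empty]
    tauto
  -- the bilinear coefficient φ p₀ p₁ is nonzero
  have hs : φ p₀ p₁ ≠ 0 := by
    intro hs0
    have hw : ∃ w, φ p₀ w ≠ 0 := by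
      by_contra h
      push_neg at h
      exact hp₀ (hnd p₀ h)
    obtain ⟨w, hw⟩ := hw
    have hwnot : w ∉ span ℝ ({p₀, p₁} : Set (Fin 3 → ℝ)) := by
      intro hmem
      rw [Submodule.mem_span_pair] at hmem
      obtain ⟨a, b, hab⟩ := hmem
      apply hw
      rw [← hab]
      simp [map_add, map_smul, hc₀, hs0, smul_eq_mul]
    have htopw := hspan3 w hwnot
    set v := (φ p₁ w) • p₀ - (φ p₀ w) • p₁ with hv
    have hφv : ∀ u', φ v u' = φ p₁ w * φ p₀ u' - φ p₀ w * φ p₁ u' := by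
      intro u'
      rw [hv]
      simp [map_sub, map_smul, smul_eq_mul]
    have hvz : ∀ z, φ v z = 0 := by
      intro z
      have hz : z ∈ span ℝ ({w, p₀, p₁} : Set (Fin 3 → ℝ)) := by rw [htopw]; trivial
      have hle : span ℝ ({w, p₀, p₁} : Set (Fin 3 → ℝ)) ≤ LinearMap.ker (φ v) := by
        rw [Submodule.span_le]
        intro u hu
        simp only [Set.mem_insert_iff, Set.mem_singleton_iff] at hu
        rcases hu with rfl | rfl | rfl <;>
          simp only [SetLike.mem_coe, LinearMap.mem_ker, hφv]
        · ring
        · rw [hc₀, hs01, hs0]; ring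
        · rw [hc₁, hs0]; ring
      exact LinearMap.mem_ker.mp (hle hz)
    have hv0 : v = 0 := hnd v hvz
    have h4 : (φ p₁ w) • p₀ + (-(φ p₀ w)) • p₁ = 0 := by
      rw [neg_smul, ← sub_eq_add_neg, ← hv, hv0]
    exact hw (neg_eq_zero.mp (hind _ _ h4).2)
  -- construct m spanning k₀ ∩ k₁
  have hT : LinearMap.ker ((φ p₀).prod (φ p₁)) ≠ ⊥ := by
    intro hbot
    have h1 := LinearMap.finrank_range_add_finrank_ker ((φ p₀).prod (φ p₁))
    rw [hbot, finrank_bot] at h1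
    have h2 : finrank ℝ (LinearMap.range ((φ p₀).prod (φ p₁))) ≤ finrank ℝ (ℝ × ℝ) :=
      Submodule.finrank_le _
    have h4 : finrank ℝ (ℝ × ℝ) = 2 := by simp
    rw [hfr3] at h1
    omega
  obtain ⟨m, hmker, hm0⟩ := (Submodule.ne_bot_iff _).mp hT
  obtain ⟨hmp₀, hmp₁⟩ : φ p₀ m = 0 ∧ φ p₁ m = 0 := by
    have h := LinearMap.mem_ker.mp hmker
    rw [LinearMap.prod_apply] at h
    exact ⟨congrArg Prod.fst h, congrArg Prod.snd h⟩
  have hmp₀' : φ m p₀ = 0 := by rw [hsymm]; exact hmp₀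
  have hmp₁' : φ m p₁ = 0 := by rw [hsymm]; exact hmp₁
  -- lines k₀ and k₁ meet only outside the chord of contact
  have hnotin : ∀ z : Fin 3 → ℝ, z ≠ 0 → φ p₀ z = 0 → φ p₁ z = 0 →
      z ∉ span ℝ ({p₀, p₁} : Set (Fin 3 → ℝ)) := by
    intro z hz h0 h1 hmem
    rw [Submodule.mem_span_pair] at hmem
    obtain ⟨a, b, hab⟩ := hmem
    have e0 : φ p₀ z = b * φ p₀ p₁ := by
      rw [← hab]; simp [map_add, map_smul, hc₀, smul_eq_mul]
    have e1 : φ p₁ z = a * φ p₀ p₁ := by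
      rw [← hab]; simp [map_add, map_smul, hc₁, hs01, smul_eq_mul]
    rw [h0] at e0; rw [h1] at e1
    have hb : b = 0 := by
      rcases mul_eq_zero.mp e0.symm with h | h
      · exact h
      · exact absurd h hs
    have ha : a = 0 := by
      rcases mul_eq_zero.mp e1.symm with h | h
      · exact h
      · exact absurd h hs
    apply hz
    rw [← hab, ha, hb, zero_smul, zero_smul, add_zero]
  have hmnotin := hnotin m hm0 hmp₀ hmp₁
  have htop := hspan3 m hmnotin
  have hc2 : φ m m ≠ 0 := by
    intro h
    have hvz : ∀ z, φ m z = 0 := by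
      intro z
      have hz : z ∈ span ℝ ({m, p₀, p₁} : Set (Fin 3 → ℝ)) := by rw [htop]; trivial
      have hle : span ℝ ({m, p₀, p₁} : Set (Fin 3 → ℝ)) ≤ LinearMap.ker (φ m) := by
        rw [Submodule.span_le]
        intro u hu
        simp only [Set.mem_insert_iff, Set.mem_singleton_iff] at hu
        rcases hu with rfl | rfl | rfl <;>
          simp only [SetLike.mem_coe, LinearMap.mem_ker]
        · exact h
        · exact hmp₀'
        · exact hmp₁'
      exact LinearMap.mem_ker.mp (hle hz)
    exact hm0 (hnd m hvz)
  -- decomposition in the basis p₀, p₁, m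
  have hdec : ∀ x : Fin 3 → ℝ, ∃ a b e : ℝ, x = a • p₀ + b • p₁ + e • m := by
    intro x
    have hx : x ∈ span ℝ ({m, p₀, p₁} : Set (Fin 3 → ℝ)) := by rw [htop]; trivial
    rw [Submodule.mem_span_insert] at hx
    obtain ⟨e, y, hy, hxy⟩ := hx
    rw [Submodule.mem_span_pair] at hy
    obtain ⟨a, b, hab⟩ := hy
    refine ⟨a, b, e, ?_⟩
    rw [hxy, ← hab]
    module
  -- membership criterion for the chord of contact
  have hcrit : ∀ x : Fin 3 → ℝ, φ m x = 0 → x ∈ span ℝ ({p₀, p₁} : Set (Fin 3 → ℝ)) := by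
    intro x hx
    obtain ⟨a, b, e, hd⟩ := hdec x
    have hmx : φ m x = e * φ m m := by
      rw [hd]; simp [map_add, map_smul, hmp₀', hmp₁', smul_eq_mul]
    rw [hx] at hmx
    have he : e = 0 := by
      rcases mul_eq_zero.mp hmx.symm with h | h
      · exact h
      · exact absurd h hc2
    rw [Submodule.mem_span_pair]
    exact ⟨a, b, by rw [hd, he, zero_smul, add_zero]⟩
  constructor
  · -- main statement
    intro i A B C D r hA0 hB0 hC0 hD0 hr0 hpA hqA hpB hqB hpC hqC hpD hqD hrAC hrBD
    obtain ⟨a₀, b₀, e₀, hq0d⟩ := hdec (q i.castSucc)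
    obtain ⟨a₁, b₁, e₁, hq1d⟩ := hdec (q i.succ)
    have hq0x : ∀ x, φ (q i.castSucc) x = a₀ * φ p₀ x + b₀ * φ p₁ x + e₀ * φ m x := by
      intro x
      rw [hq0d]
      simp [map_add, map_smul, LinearMap.add_apply, LinearMap.smul_apply, smul_eq_mul]
    have hq1x : ∀ x, φ (q i.succ) x = a₁ * φ p₀ x + b₁ * φ p₁ x + e₁ * φ m x := by
      intro x
      rw [hq1d]
      simp [map_add, map_smul, LinearMap.add_apply, LinearMap.smul_apply, smul_eq_mul]
    have hxq0 : ∀ y, φ y (q i.castSucc) = a₀ * φ y p₀ + b₀ * φ y p₁ + e₀ * φ y m := by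
      intro y
      rw [hq0d]
      simp [map_add, map_smul, smul_eq_mul]
    have hxq1 : ∀ y, φ y (q i.succ) = a₁ * φ y p₀ + b₁ * φ y p₁ + e₁ * φ y m := by
      intro y
      rw [hq1d]
      simp [map_add, map_smul, smul_eq_mul]
    -- conic conditions
    have h1 : 2 * (a₀ * b₀) * φ p₀ p₁ + (e₀ * e₀) * φ m m = 0 := by
      linear_combination hqc i.castSucc - hxq0 (q i.castSucc) - a₀ * hq0x p₀ - b₀ * hq0x p₁
        - e₀ * hq0x m - a₀ ^ 2 * hc₀ - b₀ ^ 2 * hc₁ - a₀ * e₀ * hmp₀' - b₀ * e₀ * hmp₁'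
        - a₀ * e₀ * hmp₀ - b₀ * e₀ * hmp₁ - a₀ * b₀ * hs01
    have h2 : 2 * (a₁ * b₁) * φ p₀ p₁ + (e₁ * e₁) * φ m m = 0 := by
      linear_combination hqc i.succ - hxq1 (q i.succ) - a₁ * hq1x p₀ - b₁ * hq1x p₁
        - e₁ * hq1x m - a₁ ^ 2 * hc₀ - b₁ ^ 2 * hc₁ - a₁ * e₁ * hmp₀' - b₁ * e₁ * hmp₁'
        - a₁ * e₁ * hmp₀ - b₁ * e₁ * hmp₁ - a₁ * b₁ * hs01
    -- genericity at m : e₀ ≠ 0 and e₁ ≠ 0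
    obtain ⟨g1, g2, -, -⟩ := hgen i m hm0
    have hq0m : φ (q i.castSucc) m = e₀ * φ m m := by
      linear_combination hq0x m + a₀ * hmp₀ + b₀ * hmp₁
    have hq1m : φ (q i.succ) m = e₁ * φ m m := by
      linear_combination hq1x m + a₁ * hmp₀ + b₁ * hmp₁
    have he₀ : e₀ ≠ 0 := by
      intro h
      exact g1 ⟨hmp₀, hmp₁, by rw [hq0m, h, zero_mul]⟩
    have he₁ : e₁ ≠ 0 := by
      intro h
      exact g2 ⟨hmp₀, hmp₁, by rw [hq1m, h, zero_mul]⟩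
    -- genericity at A : the line l_i does not pass through A
    obtain ⟨-, -, g3, -⟩ := hgen i A hA0
    have hq1A : φ (q i.succ) A ≠ 0 := fun h => g3 ⟨hpA, hqA, h⟩
    have eΔ : b₁ * φ p₁ A + e₁ * φ m A ≠ 0 := by
      intro h
      apply hq1A
      linear_combination hq1x A + h + a₁ * hpA
    -- scalar equations for the four vertices
    have eA : b₀ * φ p₁ A + e₀ * φ m A = 0 := by
      linear_combination hqA - hq0x A - a₀ * hpA
    have eB : b₁ * φ p₁ B + e₁ * φ m B = 0 := by
      linear_combination hqB - hq1x B - a₁ * hpB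
    have eC : a₁ * φ p₀ C + e₁ * φ m C = 0 := by
      linear_combination hqC - hq1x C - b₁ * hpC
    have eD : a₀ * φ p₀ D + e₀ * φ m D = 0 := by
      linear_combination hqD - hq0x D - b₀ * hpD
    -- coordinates of r
    rw [Submodule.mem_span_pair] at hrAC hrBD
    obtain ⟨a, c, hac⟩ := hrAC
    obtain ⟨b, d, hbd⟩ := hrBD
    have hr₁ : φ p₁ r = a * φ p₁ A := by
      rw [← hac]; simp [map_add, map_smul, hpC, smul_eq_mul]
    have hr₁' : φ p₁ r = b * φ p₁ B := by
      rw [← hbd]; simp [map_add, map_smul, hpD, smul_eq_mul]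
    have hr₀ : φ p₀ r = c * φ p₀ C := by
      rw [← hac]; simp [map_add, map_smul, hpA, smul_eq_mul]
    have hr₀' : φ p₀ r = d * φ p₀ D := by
      rw [← hbd]; simp [map_add, map_smul, hpB, smul_eq_mul]
    have hr₂ : φ m r = a * φ m A + c * φ m C := by
      rw [← hac]; simp [map_add, map_smul, smul_eq_mul]
    have hr₂' : φ m r = b * φ m B + d * φ m D := by
      rw [← hbd]; simp [map_add, map_smul, smul_eq_mul]
    -- the final algebra
    apply hcrit
    have hΔ' : b₁ * e₀ - b₀ * e₁ ≠ 0 := by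
      have hfac : e₀ * (b₁ * φ p₁ A + e₁ * φ m A) = φ p₁ A * (b₁ * e₀ - b₀ * e₁) := by
        linear_combination e₁ * eA
      have hne : φ p₁ A * (b₁ * e₀ - b₀ * e₁) ≠ 0 := hfac ▸ mul_ne_zero he₀ eΔ
      intro h
      exact hne (by rw [h, mul_zero])
    have hcon' : a₀ * b₀ * e₁ ^ 2 - a₁ * b₁ * e₀ ^ 2 = 0 := by
      have hcon : φ p₀ p₁ * (a₀ * b₀ * e₁ ^ 2 - a₁ * b₁ * e₀ ^ 2) = 0 := by
        linear_combination (e₁ ^ 2 / 2) * h1 - (e₀ ^ 2 / 2) * h2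
      rcases mul_eq_zero.mp hcon with h | h
      · exact absurd h hs
      · exact h
    have hXX : a * φ p₁ A = b * φ p₁ B := by rw [← hr₁, hr₁']
    have hYY : c * φ p₀ C = d * φ p₀ D := by rw [← hr₀, hr₀']
    have E1 : e₀ * e₁ * φ m r = -(b₀ * e₁ * (a * φ p₁ A) + a₁ * e₀ * (c * φ p₀ C)) := by
      linear_combination e₀ * e₁ * hr₂ + a * e₁ * eA + c * e₀ * eC
    have E2 : e₀ * e₁ * φ m r = -(b₁ * e₀ * (b * φ p₁ B) + a₀ * e₁ * (d * φ p₀ D)) := by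
      linear_combination e₀ * e₁ * hr₂' + b * e₀ * eB + d * e₁ * eD
    have E4 : (b₁ * e₀ - b₀ * e₁) * (a * φ p₁ A) = (a₁ * e₀ - a₀ * e₁) * (c * φ p₀ C) := by
      linear_combination E2 - E1 + b₁ * e₀ * hXX + a₀ * e₁ * hYY
    have h5 : (b₁ * e₀ - b₀ * e₁) * (e₀ * e₁ * φ m r) = 0 := by
      linear_combination (b₁ * e₀ - b₀ * e₁) * E1 - b₀ * e₁ * E4 + (c * φ p₀ C) * hcon'
    have h6 : e₀ * e₁ * φ m r = 0 := (mul_eq_zero.mp h5).resolve_left hΔ'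
    have h7 : φ m r = 0 := by
      rcases mul_eq_zero.mp h6 with h | h
      · exact absurd h (mul_ne_zero he₀ he₁)
      · exact h
    exact h7
  · exact fun z hz h0 h1 => hnotin z hz h0 h1
end

section
/- Let k₀, k₁, k₂, l₀, l₁, l₂ be six lines in the real projective plane, no three concurrent, all tangent to a common nondegenerate conic. For 1 ≤ i, j ≤ 2 let r_{i,j} be the intersection of the diagonals of the quadrilateral formed by the lines k_{i−1}, l_{j−1}, k_i, l_j. Then the three lines (r_{1,1}, r_{2,1}), (r_{1,2}, r_{2,2}), and l₁ are concurrent, and the three lines (r_{1,1}, r_{1,2}), (r_{2,1}, r_{2,2}), and k₁ are concurrent. -/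
/-!
Write the conic as the isotropic vectors of `φ`, with the tangent at `p` its polar line. For a
quadrilateral circumscribed about the conic with points of contact `p, q, p', q'`, the diagonal
points of the inscribed quadrangle `p q p' q'` are pairwise conjugate. The diagonals of the
quadrilateral are the polars of two of them, so they meet at the pole of the line joining those
two, which is the third diagonal point: `r i j` is the intersection of the chords `a i a (i+1)`
and `b j b (j+1)`. Hence the line through `r 0 0` and `r 1 0` is the chord `b 0 b 1`, the line
through `r 0 1` and `r 1 1` is the chord `b 1 b 2`, and these meet at `b 1`, the point of contact
of `l₁`; symmetrically for `k₁`.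
-/

open Module Submodule
open LinearMap (BilinForm)

variable {K V ι κ : Type*} [Field K] [AddCommGroup V] [Module K V]

variable (K) in
/-- Vectors stand for points of the projective plane `ℙ(V)`. -/
def NoThreeCollinear (P : ι → V) : Prop :=
  ∀ i j k, i ≠ j → i ≠ k → j ≠ k → P i ∉ span K {P j, P k}

theorem LinearIndependent.eq_zero_of_triple {x y z : V} (h : LinearIndependent K ![x, y, z])
    {a b c : K} (habc : a • x + b • y + c • z = 0) : a = 0 ∧ b = 0 ∧ c = 0 := by
  have := Fintype.linearIndependent_iff.mp h ![a, b, c]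
    (by simpa [Fin.sum_univ_three, add_assoc] using habc)
  exact ⟨this 0, this 1, this 2⟩

theorem LinearMap.map_eq_zero_of_mem_span_pair {W : Type*} [AddCommGroup W] [Module K W]
    (f : V →ₗ[K] W) {a b v : V} (ha : f a = 0) (hb : f b = 0) (hv : v ∈ span K {a, b}) :
    f v = 0 := by
  obtain ⟨c, d, rfl⟩ := mem_span_pair.mp hv
  simp [ha, hb]

theorem exists_ne_zero_map_eq_zero_map_eq_zero [FiniteDimensional K V] (hV : 2 < finrank K V)
    (f g : V →ₗ[K] K) : ∃ z ≠ 0, f z = 0 ∧ g z = 0 := by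
  have hker : LinearMap.ker (f.prod g) ≠ ⊥ :=
    LinearMap.ker_ne_bot_of_finrank_lt (by simpa using hV)
  obtain ⟨z, hz, hz0⟩ := exists_mem_ne_zero_of_ne_bot hker
  simp only [LinearMap.mem_ker, LinearMap.prod_apply, Function.prod, Prod.mk_eq_zero] at hz
  exact ⟨z, hz0, hz⟩

theorem span_pair_eq_of_mem_chords {c d e f g x y : V} (hcde : LinearIndependent K ![c, d, e])
    (hd : d ∉ span K {f, g}) (hx0 : x ≠ 0) (hy0 : y ≠ 0)
    (hx : x ∈ span K {c, d} ⊓ span K {f, g}) (hy : y ∈ span K {d, e} ⊓ span K {f, g}) :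
    span K {x, y} = span K {f, g} := by
  have hxy : LinearIndependent K ![x, y] := by
    rw [LinearIndependent.pair_iff' hx0]
    intro k hk
    have hk0 : k ≠ 0 := by rintro rfl; exact hy0 (by simp [← hk])
    have hxde : x ∈ span K {d, e} := by
      simpa [← hk, smul_mem_iff _ hk0] using hy.1
    obtain ⟨α, β, hαβ⟩ := mem_span_pair.mp hx.1
    obtain ⟨γ, δ, hγδ⟩ := mem_span_pair.mp hxde
    obtain ⟨hα, -, hδ⟩ := hcde.eq_zero_of_triple (a := α) (b := β - γ) (c := -δ)
      (by rw [← sub_eq_zero.mpr (hαβ.trans hγδ.symm)]; module)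
    have hβ : β ≠ 0 := by rintro rfl; exact hx0 (by simp [← hαβ, hα])
    exact hd (by simpa [← hαβ, hα, smul_mem_iff _ hβ] using hx.2)
  have := FiniteDimensional.span_of_finite K (Set.toFinite {f, g})
  refine eq_of_le_of_finrank_le (span_le.mpr ?_) ?_
  · rintro w (rfl | rfl)
    exacts [hx.2, hy.2]
  · have hxy2 := finrank_span_eq_card hxy
    have hfg2 := finrank_range_le_card (R := K) ![f, g]
    rw [Matrix.range_cons_cons_empty] at hxy2 hfg2
    rw [hxy2]
    exact hfg2

namespace NoThreeCollinear

section

variable {P : ι → V} (h : NoThreeCollinear K P)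
include h

theorem comp {f : κ → ι} (hf : f.Injective) : NoThreeCollinear K (P ∘ f) :=
  fun i j k hij hik hjk ↦ h (f i) (f j) (f k) (hf.ne hij) (hf.ne hik) (hf.ne hjk)

theorem ne_zero {i j k : ι} (hij : i ≠ j) (hik : i ≠ k) (hjk : j ≠ k) : P i ≠ 0 :=
  fun h0 ↦ h i j k hij hik hjk (h0 ▸ zero_mem _)

theorem linearIndependent {i j k : ι} (hij : i ≠ j) (hik : i ≠ k) (hjk : j ≠ k) :
    LinearIndependent K ![P i, P j, P k] := by
  refine LinearIndependent.finCons ?_ ?_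
  · rw [LinearIndependent.pair_iff' (h.ne_zero hij.symm hjk hik)]
    intro a ha
    exact h k j i hjk.symm hik.symm hij.symm (mem_span_pair.mpr ⟨a, 0, by simp [ha]⟩)
  · simpa [Matrix.range_cons] using h i k j hik hij hjk.symm

end

theorem of_polars_not_concurrent [FiniteDimensional K V] (hV : 2 < finrank K V)
    (φ : V →ₗ[K] V →ₗ[K] K) {t : ι → V}
    (h : ∀ i j k, i ≠ j → i ≠ k → j ≠ k →
      ∀ z, z ≠ 0 → ¬ (φ (t i) z = 0 ∧ φ (t j) z = 0 ∧ φ (t k) z = 0)) :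
    NoThreeCollinear K t := by
  intro i j k hij hik hjk hi
  obtain ⟨z, hz, hj, hk⟩ := exists_ne_zero_map_eq_zero_map_eq_zero hV (φ (t j)) (φ (t k))
  exact h i j k hij hik hjk z hz ⟨(φ.flip z).map_eq_zero_of_mem_span_pair hj hk hi, hj, hk⟩

theorem exists_coords [FiniteDimensional K V] (hV : finrank K V = 3)
    {p q r s : V} (h : NoThreeCollinear K ![p, q, r, s]) :
    ∃ x y z : K, x ≠ 0 ∧ y ≠ 0 ∧ z ≠ 0 ∧ s = x • p + y • q + z • r := by
  have hli : LinearIndependent K ![p, q, r] :=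
    h.linearIndependent (i := 0) (j := 1) (k := 2) (by decide) (by decide) (by decide)
  have hs : s ∈ span K (Set.range ![p, q, r]) := by
    rw [hli.span_eq_top_of_card_eq_finrank' (by simp [hV])]; trivial
  obtain ⟨c, hc⟩ := (mem_span_range_iff_exists_fun K).mp hs
  simp only [Fin.sum_univ_three, Matrix.cons_val] at hc
  refine ⟨c 0, c 1, c 2, fun h0 ↦ ?_, fun h0 ↦ ?_, fun h0 ↦ ?_, hc.symm⟩
  · exact h 3 1 2 (by decide) (by decide) (by decide)
      (mem_span_pair.mpr ⟨c 1, c 2, by simp [← hc, h0]⟩)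
  · exact h 3 0 2 (by decide) (by decide) (by decide)
      (mem_span_pair.mpr ⟨c 0, c 2, by simp [← hc, h0]⟩)
  · exact h 3 0 1 (by decide) (by decide) (by decide)
      (mem_span_pair.mpr ⟨c 0, c 1, by simp [← hc, h0]⟩)

variable {a b : Fin 3 → V} (h : NoThreeCollinear K (Fin.append a b))
include h

theorem quadrangle (i j : Fin 2) :
    NoThreeCollinear K ![a i.castSucc, b j.castSucc, a i.succ, b j.succ] := by
  convert h.comp (f := ![Fin.castAdd 3 i.castSucc, Fin.natAdd 3 j.castSucc, Fin.castAdd 3 i.succ,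
    Fin.natAdd 3 j.succ]) (by fin_cases i <;> fin_cases j <;> decide) using 1
  ext k : 1
  fin_cases k <;> simp [-Fin.natAdd_eq_addNat]

theorem mem_span_of_mem_chords {r : Fin 2 → Fin 2 → V} (hr0 : ∀ i j, r i j ≠ 0)
    (hr : ∀ i j, r i j ∈ span K {a i.castSucc, a i.succ} ⊓ span K {b j.castSucc, b j.succ}) :
    b 1 ∈ span K {r 0 0, r 1 0} ⊓ span K {r 0 1, r 1 1} ∧
      a 1 ∈ span K {r 0 0, r 0 1} ⊓ span K {r 1 0, r 1 1} := by
  have ha : LinearIndependent K ![a 0, a 1, a 2] :=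
    h.linearIndependent (i := 0) (j := 1) (k := 2) (by decide) (by decide) (by decide)
  have hb : LinearIndependent K ![b 0, b 1, b 2] :=
    h.linearIndependent (i := 3) (j := 4) (k := 5) (by decide) (by decide) (by decide)
  have hr' : ∀ i j, r i j ∈ span K {b j.castSucc, b j.succ} ⊓ span K {a i.castSucc, a i.succ} :=
    fun i j ↦ ⟨(hr i j).2, (hr i j).1⟩
  have ha₀₁ : a 1 ∉ span K {b 0, b 1} := h 1 3 4 (by decide) (by decide) (by decide)
  have ha₁₂ : a 1 ∉ span K {b 1, b 2} := h 1 4 5 (by decide) (by decide) (by decide)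
  have hb₀₁ : b 1 ∉ span K {a 0, a 1} := h 4 0 1 (by decide) (by decide) (by decide)
  have hb₁₂ : b 1 ∉ span K {a 1, a 2} := h 4 1 2 (by decide) (by decide) (by decide)
  have hr' : ∀ i j, r i j ∈ span K {b j.castSucc, b j.succ} ⊓ span K {a i.castSucc, a i.succ} :=
    fun i j ↦ ⟨(hr i j).2, (hr i j).1⟩
  refine ⟨⟨?_, ?_⟩, ⟨?_, ?_⟩⟩
  · rw [span_pair_eq_of_mem_chords ha ha₀₁ (hr0 0 0) (hr0 1 0) (hr 0 0) (hr 1 0)]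
    exact subset_span (by simp)
  · rw [span_pair_eq_of_mem_chords ha ha₁₂ (hr0 0 1) (hr0 1 1) (hr 0 1) (hr 1 1)]
    exact subset_span (by simp)
  · rw [span_pair_eq_of_mem_chords hb hb₀₁ (hr0 0 0) (hr0 0 1) (hr' 0 0) (hr' 0 1)]
    exact subset_span (by simp)
  · rw [span_pair_eq_of_mem_chords hb hb₁₂ (hr0 1 0) (hr0 1 1) (hr' 1 0) (hr' 1 1)]
    exact subset_span (by simp)

end NoThreeCollinear

namespace LinearMap.BilinForm

variable {φ : BilinForm K V}

/-- The diagonal points `x • p + y • q` and `x • p + z • r` of the quadrangle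
`p, q, r, x • p + y • q + z • r` inscribed in the conic of `φ` are conjugate. -/
theorem apply_add_smul_add_smul_eq_zero [NeZero (2 : K)] (hφ : φ.IsSymm) {p q r : V}
    (hp : φ p p = 0) (hq : φ q q = 0) (hr : φ r r = 0) {x y z : K}
    (h : φ (x • p + y • q + z • r) (x • p + y • q + z • r) = 0) :
    φ (x • p + y • q) (x • p + z • r) = 0 := by
  have h2 : 2 * φ (x • p + y • q) (x • p + z • r) = 0 := by
    simp only [map_add, map_smul, LinearMap.add_apply, LinearMap.smul_apply, smul_eq_mul] at h ⊢
    linear_combination h + x ^ 2 * hp - y ^ 2 * hq - z ^ 2 * hr + x * y * hφ.eq q p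
      + x * z * hφ.eq p r + y * z * hφ.eq q r
  exact (mul_eq_zero.mp h2).resolve_left two_ne_zero

theorem mem_span_singleton_of_apply_eq_zero [FiniteDimensional K V] (hφ : φ.Nondegenerate)
    (hV : finrank K V = 3) {u v s r : V} (huv : LinearIndependent K ![u, v]) (hs : s ≠ 0)
    (hus : φ u s = 0) (hvs : φ v s = 0) (hur : φ u r = 0) (hvr : φ v r = 0) :
    r ∈ span K {s} := by
  have mem_orth : ∀ w, φ u w = 0 → φ v w = 0 → w ∈ φ.orthogonal (span K {u, v}) :=
    fun w hu hv n hn ↦ (φ.flip w).map_eq_zero_of_mem_span_pair hu hv hn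
  have hfin : finrank K (φ.orthogonal (span K {u, v})) = 1 := by
    have := finrank_span_eq_card huv
    rw [Matrix.range_cons_cons_empty] at this
    rw [finrank_orthogonal hφ, hV, this]; simp
  have : span K {s} = φ.orthogonal (span K {u, v}) :=
    eq_of_le_of_finrank_eq ((span_singleton_le_iff_mem _ _).mpr (mem_orth s hus hvs))
      (by rw [finrank_span_singleton hs, hfin])
  exact this ▸ mem_orth r hur hvr

theorem mem_span_chords_of_mem_span_diagonals [FiniteDimensional K V] [NeZero (2 : K)]
    (hφ : φ.IsSymm) (hφ' : φ.Nondegenerate) (hV : finrank K V = 3) {p q p' q' A B C D r : V}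
    (hgen : NoThreeCollinear K ![p, q, p', q'])
    (hp : φ p p = 0) (hq : φ q q = 0) (hp' : φ p' p' = 0) (hq' : φ q' q' = 0)
    (hpA : φ p A = 0) (hqA : φ q A = 0) (hpB : φ p B = 0) (hq'B : φ q' B = 0)
    (hp'C : φ p' C = 0) (hq'C : φ q' C = 0) (hp'D : φ p' D = 0) (hqD : φ q D = 0)
    (hAC : r ∈ span K {A, C}) (hBD : r ∈ span K {B, D}) :
    r ∈ span K {p, p'} ∧ r ∈ span K {q, q'} := by
  obtain ⟨x, y, z, hx, -, hz, hq'_eq⟩ := hgen.exists_coords hV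
  have hpqp' : LinearIndependent K ![p, q, p'] :=
    hgen.linearIndependent (i := 0) (j := 1) (k := 2) (by decide) (by decide) (by decide)
  -- the diagonal points `pq ∩ p'q'`, `qp' ∩ pq'` and `pp' ∩ qq'`
  obtain ⟨u, hu⟩ : ∃ u, u = x • p + y • q := ⟨_, rfl⟩
  obtain ⟨v, hv⟩ : ∃ v, v = y • q + z • p' := ⟨_, rfl⟩
  obtain ⟨s, hs⟩ : ∃ s, s = x • p + z • p' := ⟨_, rfl⟩
  have hus : φ u s = 0 := hu ▸ hs ▸ apply_add_smul_add_smul_eq_zero hφ hp hq hp' (hq'_eq ▸ hq')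
  have hvs : φ v s = 0 := by
    have hq'_eq' : q' = z • p' + y • q + x • p := by rw [hq'_eq]; abel
    have := apply_add_smul_add_smul_eq_zero hφ hp' hq hp (hq'_eq' ▸ hq')
    rwa [add_comm (z • p'), add_comm (z • p'), ← hv, ← hs] at this
  have hur : φ u r = 0 := by
    refine (φ u).map_eq_zero_of_mem_span_pair ?_ ?_ hAC
    · simp [hu, hpA, hqA]
    · rw [show u = q' - z • p' by rw [hq'_eq, hu]; abel]; simp [hp'C, hq'C]
  have hvr : φ v r = 0 := by
    refine (φ v).map_eq_zero_of_mem_span_pair ?_ ?_ hBD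
    · rw [show v = q' - x • p by rw [hq'_eq, hv]; abel]; simp [hpB, hq'B]
    · simp [hv, hqD, hp'D]
  have huv : LinearIndependent K ![u, v] := by
    refine LinearIndependent.pair_iff.mpr fun a b hab ↦ ?_
    obtain ⟨h1, -, h3⟩ := hpqp'.eq_zero_of_triple (a := a * x) (b := a * y + b * y) (c := b * z)
      (by rw [← hab, hu, hv]; module)
    exact ⟨(mul_eq_zero.mp h1).resolve_right hx, (mul_eq_zero.mp h3).resolve_right hz⟩
  have hs0 : s ≠ 0 := fun h0 ↦
    hx (hpqp'.eq_zero_of_triple (a := x) (b := 0) (c := z) (by rw [← h0, hs]; module)).1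
  have hrs := mem_span_singleton_of_apply_eq_zero hφ' hV huv hs0 hus hvs hur hvr
  refine ⟨(span_singleton_le_iff_mem _ _).mpr ?_ hrs, (span_singleton_le_iff_mem _ _).mpr ?_ hrs⟩
  · exact mem_span_pair.mpr ⟨x, z, hs.symm⟩
  · exact mem_span_pair.mpr ⟨-y, 1, by rw [hq'_eq, hs]; module⟩

end LinearMap.BilinForm

theorem stmt18_general (φ : (Fin 3 → ℝ) →ₗ[ℝ] (Fin 3 → ℝ) →ₗ[ℝ] ℝ)
    (hsymm : ∀ y z, φ y z = φ z y)
    (hnd : ∀ y : Fin 3 → ℝ, (∀ z, φ y z = 0) → y = 0)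
    (a b : Fin 3 → Fin 3 → ℝ)
    (hac : ∀ i, φ (a i) (a i) = 0) (hbc : ∀ i, φ (b i) (b i) = 0)
    (t : Fin 6 → Fin 3 → ℝ) (ht : t = ![a 0, a 1, a 2, b 0, b 1, b 2])
    -- genericity: no three of the six tangent lines are concurrent
    (hgen : ∀ (i j k : Fin 6), i ≠ j → i ≠ k → j ≠ k →
        ∀ z : Fin 3 → ℝ, z ≠ 0 →
          ¬ (φ (t i) z = 0 ∧ φ (t j) z = 0 ∧ φ (t k) z = 0))
    (r : Fin 2 → Fin 2 → Fin 3 → ℝ)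
    -- r i j is the diagonal intersection point of the quadrilateral formed by
    -- k_i = polar (a i), l_j = polar (b j), k_{i+1} = polar (a (i+1)), l_{j+1} = polar (b (j+1))
    (hr : ∀ i j : Fin 2, r i j ≠ 0 ∧ ∃ A B C D : Fin 3 → ℝ,
        A ≠ 0 ∧ B ≠ 0 ∧ C ≠ 0 ∧ D ≠ 0 ∧
        φ (a i.castSucc) A = 0 ∧ φ (b j.castSucc) A = 0 ∧
        φ (a i.castSucc) B = 0 ∧ φ (b j.succ) B = 0 ∧
        φ (a i.succ) C = 0 ∧ φ (b j.succ) C = 0 ∧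
        φ (a i.succ) D = 0 ∧ φ (b j.castSucc) D = 0 ∧
        r i j ∈ Submodule.span ℝ ({A, C} : Set (Fin 3 → ℝ)) ∧
        r i j ∈ Submodule.span ℝ ({B, D} : Set (Fin 3 → ℝ))) :
    (∃ m : Fin 3 → ℝ, m ≠ 0 ∧
        m ∈ Submodule.span ℝ ({r 0 0, r 1 0} : Set (Fin 3 → ℝ)) ∧
        m ∈ Submodule.span ℝ ({r 0 1, r 1 1} : Set (Fin 3 → ℝ)) ∧
        φ (b 1) m = 0) ∧
    (∃ m : Fin 3 → ℝ, m ≠ 0 ∧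
        m ∈ Submodule.span ℝ ({r 0 0, r 0 1} : Set (Fin 3 → ℝ)) ∧
        m ∈ Submodule.span ℝ ({r 1 0, r 1 1} : Set (Fin 3 → ℝ)) ∧
        φ (a 1) m = 0) := by
  subst ht
  have hcol : NoThreeCollinear ℝ (Fin.append a b) := by
    convert NoThreeCollinear.of_polars_not_concurrent (by simp) φ hgen using 1
    ext i : 1; fin_cases i <;> rfl
  have hchord : ∀ i j : Fin 2, r i j ∈ span ℝ {a i.castSucc, a i.succ} ⊓
      span ℝ {b j.castSucc, b j.succ} := fun i j ↦ by
    obtain ⟨-, A, B, C, D, -, -, -, -, hA₁, hA₂, hB₁, hB₂, hC₁, hC₂, hD₁, hD₂, hAC, hBD⟩ := hr i j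
    exact LinearMap.BilinForm.mem_span_chords_of_mem_span_diagonals ⟨hsymm⟩
      ⟨hnd, fun y hy ↦ hnd y fun z ↦ (hsymm y z).trans (hy z)⟩ (by simp) (hcol.quadrangle i j)
      (hac _) (hbc _) (hac _) (hbc _) hA₁ hA₂ hB₁ hB₂ hC₁ hC₂ hD₁ hD₂ hAC hBD
  obtain ⟨hb₁, ha₁⟩ := hcol.mem_span_of_mem_chords (fun i j ↦ (hr i j).1) hchord
  exact ⟨⟨b 1, hcol.ne_zero (i := 4) (j := 0) (k := 1) (by decide) (by decide) (by decide),
      hb₁.1, hb₁.2, hbc 1⟩,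
    ⟨a 1, hcol.ne_zero (i := 1) (j := 0) (k := 2) (by decide) (by decide) (by decide),
      ha₁.1, ha₁.2, hac 1⟩⟩

/-- for six generic lines `k₀,k₁,k₂,l₀,l₁,l₂` tangent to a nondegenerate
conic (given as the polars of the conic points `a 0, a 1, a 2, b 0, b 1, b 2`), the lines
`(r₁₁,r₂₁)`, `(r₁₂,r₂₂)`, `l₁` are concurrent, and the lines `(r₁₁,r₁₂)`, `(r₂₁,r₂₂)`,
`k₁` are concurrent, where `r_{i,j}` is the diagonal intersection point of the
quadrilateral formed by `k_{i−1}, l_{j−1}, k_i, l_j`. -/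
theorem stmt18 (φ : (Fin 3 → ℝ) →ₗ[ℝ] (Fin 3 → ℝ) →ₗ[ℝ] ℝ)
    (hsymm : ∀ y z, φ y z = φ z y)
    (hnd : ∀ y : Fin 3 → ℝ, (∀ z, φ y z = 0) → y = 0)
    (a b : Fin 3 → Fin 3 → ℝ)
    (ha : ∀ i, a i ≠ 0) (hb : ∀ i, b i ≠ 0)
    (hac : ∀ i, φ (a i) (a i) = 0) (hbc : ∀ i, φ (b i) (b i) = 0)
    (t : Fin 6 → Fin 3 → ℝ) (ht : t = ![a 0, a 1, a 2, b 0, b 1, b 2])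
    -- genericity: no three of the six tangent lines are concurrent
    (hgen : ∀ (i j k : Fin 6), i ≠ j → i ≠ k → j ≠ k →
        ∀ z : Fin 3 → ℝ, z ≠ 0 →
          ¬ (φ (t i) z = 0 ∧ φ (t j) z = 0 ∧ φ (t k) z = 0))
    (r : Fin 2 → Fin 2 → Fin 3 → ℝ)
    -- r i j is the diagonal intersection point of the quadrilateral formed by
    -- k_i = polar (a i), l_j = polar (b j), k_{i+1} = polar (a (i+1)), l_{j+1} = polar (b (j+1))
    (hr : ∀ i j : Fin 2, r i j ≠ 0 ∧ ∃ A B C D : Fin 3 → ℝ,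
        A ≠ 0 ∧ B ≠ 0 ∧ C ≠ 0 ∧ D ≠ 0 ∧
        φ (a i.castSucc) A = 0 ∧ φ (b j.castSucc) A = 0 ∧
        φ (a i.castSucc) B = 0 ∧ φ (b j.succ) B = 0 ∧
        φ (a i.succ) C = 0 ∧ φ (b j.succ) C = 0 ∧
        φ (a i.succ) D = 0 ∧ φ (b j.castSucc) D = 0 ∧
        r i j ∈ Submodule.span ℝ ({A, C} : Set (Fin 3 → ℝ)) ∧
        r i j ∈ Submodule.span ℝ ({B, D} : Set (Fin 3 → ℝ))) :
    (∃ m : Fin 3 → ℝ, m ≠ 0 ∧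
        m ∈ Submodule.span ℝ ({r 0 0, r 1 0} : Set (Fin 3 → ℝ)) ∧
        m ∈ Submodule.span ℝ ({r 0 1, r 1 1} : Set (Fin 3 → ℝ)) ∧
        φ (b 1) m = 0) ∧
    (∃ m : Fin 3 → ℝ, m ≠ 0 ∧
        m ∈ Submodule.span ℝ ({r 0 0, r 0 1} : Set (Fin 3 → ℝ)) ∧
        m ∈ Submodule.span ℝ ({r 1 0, r 1 1} : Set (Fin 3 → ℝ)) ∧
        φ (a 1) m = 0) :=
  stmt18_general φ hsymm hnd a b hac hbc t ht hgen r hr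
end

section
/- In the real affine plane, consider a 2×2 grid of quadrilaterals determined by generic lines k₀, k₁, k₂ and l₀, l₁, l₂ (no three concurrent, no two parallel in the configuration used), with diagonal intersection points r_{i,j} of the quadrilateral formed by k_{i−1}, l_{j−1}, k_i, l_j. Suppose the Koenigs condition holds at the central vertex k₁ ∩ l₁: (l(k₀∩l₁, r_{1,1})/l(r_{1,1}, k₁∩l₀)) · (l(k₁∩l₀, r_{2,1})/l(r_{2,1}, k₂∩l₁)) · (l(k₂∩l₁, r_{2,2})/l(r_{2,2}, k₁∩l₂)) · (l(k₁∩l₂, r_{1,2})/l(r_{1,2}, k₀∩l₁)) = 1, where l(·,·) denotes oriented length along the relevant diagonal line. Then the two lines (r_{1,1}, r_{2,1}) and (r_{1,2}, r_{2,2}) meet on the line l₁, and the two lines (r_{1,1}, r_{1,2}) and (r_{2,1}, r_{2,2}) meet on the line k₁. -/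
/-- with `A = k₀∩l₁`, `B = k₁∩l₀`, `C = k₂∩l₁`, `D = k₁∩l₂` and
`O = k₁∩l₁` (so `l₁` is the line `(A,C)` and `k₁` is the line `(B,D)`), if the Koenigs
condition holds at the central vertex, then the lines `(r₁₁,r₂₁)` and `(r₁₂,r₂₂)` meet on
`l₁`, and the lines `(r₁₁,r₁₂)` and `(r₂₁,r₂₂)` meet on `k₁`. -/
theorem stmt19 (A B C D O : ℝ × ℝ)
    (hABC : ¬ Collinear ℝ ({A, B, C} : Set (ℝ × ℝ)))
    (hBCD : ¬ Collinear ℝ ({B, C, D} : Set (ℝ × ℝ)))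
    (hCDA : ¬ Collinear ℝ ({C, D, A} : Set (ℝ × ℝ)))
    (hDAB : ¬ Collinear ℝ ({D, A, B} : Set (ℝ × ℝ)))
    (hO₁ : O ∈ affineSpan ℝ ({A, C} : Set (ℝ × ℝ)))
    (hO₂ : O ∈ affineSpan ℝ ({B, D} : Set (ℝ × ℝ)))
    (s₁ s₂ s₃ s₄ : ℝ)
    (hs₁ : s₁ ≠ 0) (hs₁' : s₁ ≠ 1) (hs₂ : s₂ ≠ 0) (hs₂' : s₂ ≠ 1)
    (hs₃ : s₃ ≠ 0) (hs₃' : s₃ ≠ 1) (hs₄ : s₄ ≠ 0) (hs₄' : s₄ ≠ 1)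
    (r₁₁ r₂₁ r₂₂ r₁₂ : ℝ × ℝ)
    -- r₁₁ divides A→B in ratio s₁ : (1−s₁), etc.
    (h11 : r₁₁ = A + s₁ • (B - A))
    (h21 : r₂₁ = B + s₂ • (C - B))
    (h22 : r₂₂ = C + s₃ • (D - C))
    (h12 : r₁₂ = D + s₄ • (A - D))
    -- Koenigs condition: product of the oriented length ratios equals 1
    (hK : (s₁ / (1 - s₁)) * (s₂ / (1 - s₂)) * (s₃ / (1 - s₃)) * (s₄ / (1 - s₄)) = 1)
    -- no two of the relevant lines are parallel (nor coincident)
    (hnp₁ : ¬ AffineSubspace.Parallel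
        (affineSpan ℝ ({r₁₁, r₂₁} : Set (ℝ × ℝ)))
        (affineSpan ℝ ({r₁₂, r₂₂} : Set (ℝ × ℝ))))
    (hnp₂ : ¬ AffineSubspace.Parallel
        (affineSpan ℝ ({r₁₁, r₁₂} : Set (ℝ × ℝ)))
        (affineSpan ℝ ({r₂₁, r₂₂} : Set (ℝ × ℝ)))) :
    (∃ P : ℝ × ℝ,
        P ∈ affineSpan ℝ ({r₁₁, r₂₁} : Set (ℝ × ℝ)) ∧
        P ∈ affineSpan ℝ ({r₁₂, r₂₂} : Set (ℝ × ℝ)) ∧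
        P ∈ affineSpan ℝ ({A, C} : Set (ℝ × ℝ))) ∧
    (∃ P : ℝ × ℝ,
        P ∈ affineSpan ℝ ({r₁₁, r₁₂} : Set (ℝ × ℝ)) ∧
        P ∈ affineSpan ℝ ({r₂₁, r₂₂} : Set (ℝ × ℝ)) ∧
        P ∈ affineSpan ℝ ({B, D} : Set (ℝ × ℝ))) := by
  have h1 : (1:ℝ) - s₁ ≠ 0 := sub_ne_zero.mpr (Ne.symm hs₁')
  have h2 : (1:ℝ) - s₂ ≠ 0 := sub_ne_zero.mpr (Ne.symm hs₂')
  have h3 : (1:ℝ) - s₃ ≠ 0 := sub_ne_zero.mpr (Ne.symm hs₃')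
  have h4 : (1:ℝ) - s₄ ≠ 0 := sub_ne_zero.mpr (Ne.symm hs₄')
  have hK' : s₁ * s₂ * s₃ * s₄ = (1 - s₁) * (1 - s₂) * (1 - s₃) * (1 - s₄) := by
    field_simp at hK
    linear_combination hK
  subst h11 h21 h22 h12
  -- degenerate case 1: s₁ + s₂ = 1 forces both lines parallel to AC
  by_cases hd1 : s₁ + s₂ - 1 = 0
  · exfalso
    have hs2e : s₂ = 1 - s₁ := by linarith
    subst hs2e
    have h0 : s₁ * (1 - s₁) * (s₃ + s₄ - 1) = 0 := by linear_combination hK'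
    have hd2 : s₄ = 1 - s₃ := by
      rcases mul_eq_zero.mp h0 with h | h
      · rcases mul_eq_zero.mp h with h | h
        · exact absurd h hs₁
        · exact absurd h h1
      · linarith
    subst hd2
    apply hnp₁
    rw [AffineSubspace.affineSpan_pair_parallel_iff_vectorSpan_eq,
      vectorSpan_pair, vectorSpan_pair]
    have e1 : (A + s₁ • (B - A)) -ᵥ (B + (1 - s₁) • (C - B)) = (-(1 - s₁)) • (C - A) := by
      refine Prod.ext ?_ ?_ <;> simp [vsub_eq_sub] <;> ring
    have e2 : (D + (1 - s₃) • (A - D)) -ᵥ (C + s₃ • (D - C)) = (-(1 - s₃)) • (C - A) := by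
      refine Prod.ext ?_ ?_ <;> simp [vsub_eq_sub] <;> ring
    rw [e1, e2,
      Submodule.span_singleton_smul_eq (isUnit_iff_ne_zero.mpr (neg_ne_zero.mpr h1)) _,
      Submodule.span_singleton_smul_eq (isUnit_iff_ne_zero.mpr (neg_ne_zero.mpr h3)) _]
  -- degenerate case 2: s₁ + s₄ = 1 forces both lines parallel to BD
  by_cases he1 : s₁ + s₄ - 1 = 0
  · exfalso
    have hs4e : s₄ = 1 - s₁ := by linarith
    subst hs4e
    have h0 : s₁ * (1 - s₁) * (s₂ + s₃ - 1) = 0 := by linear_combination hK'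
    have he2 : s₃ = 1 - s₂ := by
      rcases mul_eq_zero.mp h0 with h | h
      · rcases mul_eq_zero.mp h with h | h
        · exact absurd h hs₁
        · exact absurd h h1
      · linarith
    subst he2
    apply hnp₂
    rw [AffineSubspace.affineSpan_pair_parallel_iff_vectorSpan_eq,
      vectorSpan_pair, vectorSpan_pair]
    have e1 : (A + s₁ • (B - A)) -ᵥ (D + (1 - s₁) • (A - D)) = s₁ • (B - D) := by
      refine Prod.ext ?_ ?_ <;> simp [vsub_eq_sub] <;> ring
    have e2 : (B + s₂ • (C - B)) -ᵥ (C + (1 - s₂) • (D - C)) = (1 - s₂) • (B - D) := by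
      refine Prod.ext ?_ ?_ <;> simp [vsub_eq_sub] <;> ring
    rw [e1, e2,
      Submodule.span_singleton_smul_eq (isUnit_iff_ne_zero.mpr hs₁) _,
      Submodule.span_singleton_smul_eq (isUnit_iff_ne_zero.mpr h2) _]
  -- main case: all relevant denominators are nonzero
  have hd2 : s₃ + s₄ - 1 ≠ 0 := by
    intro h
    apply hd1
    have hs4e : s₄ = 1 - s₃ := by linarith
    subst hs4e
    have h0 : s₃ * (1 - s₃) * (s₁ + s₂ - 1) = 0 := by linear_combination hK'
    rcases mul_eq_zero.mp h0 with h | h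
    · rcases mul_eq_zero.mp h with h | h
      · exact absurd h hs₃
      · exact absurd h h3
    · exact h
  have he2 : s₂ + s₃ - 1 ≠ 0 := by
    intro h
    apply he1
    have hs3e : s₃ = 1 - s₂ := by linarith
    subst hs3e
    have h0 : s₂ * (1 - s₂) * (s₁ + s₄ - 1) = 0 := by linear_combination hK'
    rcases mul_eq_zero.mp h0 with h | h
    · rcases mul_eq_zero.mp h with h | h
      · exact absurd h hs₂
      · exact absurd h h2
    · exact h
  have qeq : s₁ * s₂ / (s₁ + s₂ - 1) = (s₄ - 1) * (1 - s₃) / (s₃ + s₄ - 1) := by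
    rw [div_eq_div_iff hd1 hd2]
    linear_combination hK'
  have qeq2 : s₂ * s₃ / (s₂ + s₃ - 1) = (-(1 - s₁) * (1 - s₄)) / (s₁ + s₄ - 1) := by
    rw [div_eq_div_iff he2 he1]
    linear_combination hK'
  constructor
  · refine ⟨AffineMap.lineMap A C (s₁ * s₂ / (s₁ + s₂ - 1)), ?_, ?_,
      AffineMap.lineMap_mem_affineSpan_pair _ _ _⟩
    · have : (AffineMap.lineMap A C (s₁ * s₂ / (s₁ + s₂ - 1)) : ℝ × ℝ) =
        AffineMap.lineMap (A + s₁ • (B - A)) (B + s₂ • (C - B)) (s₁ / (s₁ + s₂ - 1)) := by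
        simp only [AffineMap.lineMap_apply, vsub_eq_sub, vadd_eq_add]
        refine Prod.ext ?_ ?_ <;> simp <;> field_simp <;> ring
      rw [this]
      exact AffineMap.lineMap_mem_affineSpan_pair _ _ _
    · have : (AffineMap.lineMap A C (s₁ * s₂ / (s₁ + s₂ - 1)) : ℝ × ℝ) =
        AffineMap.lineMap (D + s₄ • (A - D)) (C + s₃ • (D - C)) ((s₄ - 1) / (s₃ + s₄ - 1)) := by
        rw [qeq]
        simp only [AffineMap.lineMap_apply, vsub_eq_sub, vadd_eq_add]
        refine Prod.ext ?_ ?_ <;> simp <;> field_simp <;> ring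
      rw [this]
      exact AffineMap.lineMap_mem_affineSpan_pair _ _ _
  · refine ⟨AffineMap.lineMap B D (s₂ * s₃ / (s₂ + s₃ - 1)), ?_, ?_,
      AffineMap.lineMap_mem_affineSpan_pair _ _ _⟩
    · have : (AffineMap.lineMap B D (s₂ * s₃ / (s₂ + s₃ - 1)) : ℝ × ℝ) =
        AffineMap.lineMap (A + s₁ • (B - A)) (D + s₄ • (A - D)) ((s₁ - 1) / (s₁ + s₄ - 1)) := by
        rw [qeq2]
        simp only [AffineMap.lineMap_apply, vsub_eq_sub, vadd_eq_add]
        refine Prod.ext ?_ ?_ <;> simp <;> field_simp <;> ring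
      rw [this]
      exact AffineMap.lineMap_mem_affineSpan_pair _ _ _
    · have : (AffineMap.lineMap B D (s₂ * s₃ / (s₂ + s₃ - 1)) : ℝ × ℝ) =
        AffineMap.lineMap (B + s₂ • (C - B)) (C + s₃ • (D - C)) (s₂ / (s₂ + s₃ - 1)) := by
        simp only [AffineMap.lineMap_apply, vsub_eq_sub, vadd_eq_add]
        refine Prod.ext ?_ ?_ <;> simp <;> field_simp <;> ring
      rw [this]
      exact AffineMap.lineMap_mem_affineSpan_pair _ _ _
end
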